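/- arXiv:2603.15165 — 8 statements merged into one kernel-verified Lean document; each statement's English description precedes it below -/
import Mathlib

section
/- Let G be a connected graph with burning sequence S_G = (v_1, ..., v_n) of a burning (lambda, S_G). Then there exists a spanning tree T of G such that S_G is a burning sequence for some burning of T. -/
open SimpleGraph

/-- The `j`-th burned set `𝒩_j`: vertices within distance `j - k` of source `v_k` (`1 ≤ k ≤ j`). -/
def burnN {V : Type*} (G : SimpleGraph V) (s : ℕ → V) (n j : ℕ) : Set V :=
  {w | ∃ k, 1 ≤ k ∧ k ≤ n ∧ k ≤ j ∧ G.Reachable (s k) w ∧ G.dist (s k) w ≤ j - k}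

/-- The set `U_j`: vertices within distance `j - k` of source `v_k` for `1 ≤ k ≤ j - 1`. -/
def burnU {V : Type*} (G : SimpleGraph V) (s : ℕ → V) (n j : ℕ) : Set V :=
  {w | ∃ k, 1 ≤ k ∧ k ≤ n ∧ k + 1 ≤ j ∧ G.Reachable (s k) w ∧ G.dist (s k) w ≤ j - k}

/-- `(s 1, …, s n)` is a burning sequence: `v_j ∉ U_j` for `2 ≤ j ≤ n`, and `U_{n+1} = G`. -/
def IsBurningSeq {V : Type*} (G : SimpleGraph V) (s : ℕ → V) (n : ℕ) : Prop :=
  1 ≤ n ∧ (∀ j, 2 ≤ j → j ≤ n → s j ∉ burnU G s n j) ∧ ∀ w, w ∈ burnU G s n (n + 1)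

/-- The burning map `λ(w) = min { j | w ∈ 𝒩_j }`. -/
noncomputable def burnTime {V : Type*} (G : SimpleGraph V) (s : ℕ → V) (n : ℕ) (w : V) : ℕ :=
  sInf {j | w ∈ burnN G s n j}

/-- The end time `𝐓 = max_w λ(w)` of the burning. -/
noncomputable def endTime {V : Type*} [Fintype V] (G : SimpleGraph V) (s : ℕ → V) (n : ℕ) : ℕ :=
  Finset.univ.sup (burnTime G s n)

/-- A burning whose burning map is a homomorphism: `|λ(v) - λ(w)| = 1` on every edge. -/
def IsBurningHom {V : Type*} (G : SimpleGraph V) (s : ℕ → V) (n : ℕ) : Prop :=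
  IsBurningSeq G s n ∧
    ∀ v w, G.Adj v w →
      ((burnTime G s n v : ℤ) - burnTime G s n w).natAbs = 1

/-!
Let `λ` be the burning map of `G`. A burnt vertex that is not a source has a neighbour that burns
strictly earlier. Choosing one such parent for every vertex gives a forest, as `λ` decreases along
parent edges, and this forest extends to a spanning tree `T` of `G`. Following parents in `T`, every
vertex is reached from a source early enough to burn in `T` by time `λ`, hence by time `n + 1`;
and since distances in `T` dominate those in `G`, no source is burnt in `T` before it is lit.
-/

namespace SimpleGraph

variable {V : Type*} {G : SimpleGraph V}

lemma exists_adj_dist_lt_of_dist_ne_zero {u v : V} (h : G.dist u v ≠ 0) :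
    ∃ x, G.Adj x v ∧ G.Reachable u x ∧ G.dist u x < G.dist u v := by
  obtain ⟨p, hp⟩ := exists_walk_of_dist_ne_zero h
  have hnil : ¬ p.Nil := by
    rw [← Walk.length_eq_zero_iff]
    omega
  refine ⟨p.penultimate, p.adj_penultimate hnil, p.dropLast.reachable, ?_⟩
  calc G.dist u p.penultimate ≤ p.dropLast.length := dist_le _
    _ < G.dist u v := by rw [Walk.length_dropLast]; omega

/-- Fixed points of `p` are roots, since `fromRel` drops loops. -/
def parentGraph (p : V → V) : SimpleGraph V :=
  fromRel fun a b => a = p b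

/-- A cycle through a vertex `m` of maximal rank would leave `m` along two distinct edges, but
the only edge at `m` going down in rank is the one to `p m`. -/
lemma parentGraph_isAcyclic (p : V → V) (f : V → ℕ) (hf : ∀ v, p v ≠ v → f (p v) < f v) :
    (parentGraph p).IsAcyclic := by
  classical
  intro v c hc
  obtain ⟨m, hm, hmax⟩ := c.support.toFinset.exists_max_image f ⟨v, by simp⟩
  rw [List.mem_toFinset] at hm
  have hc' : (c.rotate m hm).IsCycle := (Walk.isCycle_rotate hm).mpr hc
  have to_parent : ∀ u ∈ (c.rotate m hm).support, (parentGraph p).Adj m u → u = p m := by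
    rintro u hu ⟨hne, rfl | rfl⟩
    · have := hmax u (by simpa using hu)
      have := hf u hne
      omega
    · rfl
  exact hc'.snd_ne_penultimate <|
    (to_parent _ (Walk.getVert_mem_support _ _) (Walk.adj_snd hc'.not_nil)).trans
      (to_parent _ (Walk.getVert_mem_support _ _) (Walk.adj_penultimate hc'.not_nil).symm).symm

lemma exists_isAcyclic_le_of_forall_or_exists_adj_lt (R : V → Prop) (f : V → ℕ)
    (h : ∀ w, R w ∨ ∃ u, G.Adj u w ∧ f u < f w) :
    ∃ F ≤ G, F.IsAcyclic ∧ ∀ w, R w ∨ ∃ u, F.Adj u w ∧ f u < f w := by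
  have : ∀ w, ∃ x, (x = w ∧ R w) ∨ (G.Adj x w ∧ f x < f w) := fun w =>
    (h w).elim (fun hw => ⟨w, .inl ⟨rfl, hw⟩⟩) fun ⟨u, hu⟩ => ⟨u, .inr hu⟩
  choose p hp using this
  have parent_adj : ∀ w, p w ≠ w → G.Adj (p w) w ∧ f (p w) < f w := fun w hne =>
    (hp w).resolve_left fun h' => hne h'.1
  refine ⟨parentGraph p, ?_, parentGraph_isAcyclic p f fun w hne => (parent_adj w hne).2, ?_⟩
  · rintro a b ⟨hne, rfl | rfl⟩
    · exact (parent_adj b hne).1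
    · exact (parent_adj a hne.symm).1.symm
  · intro w
    exact (hp w).imp (fun h' => h'.2) fun h' => ⟨p w, ⟨h'.1.ne, .inl rfl⟩, h'.2⟩

end SimpleGraph

section Burning

variable {V : Type*} {G H : SimpleGraph V} {s : ℕ → V} {n : ℕ}

def IsSourceBy (s : ℕ → V) (n j : ℕ) (w : V) : Prop :=
  ∃ k, 1 ≤ k ∧ k ≤ n ∧ k ≤ j ∧ s k = w

lemma IsSourceBy.mem_burnN {j : ℕ} {w : V} (h : IsSourceBy s n j w) : w ∈ burnN G s n j := by
  obtain ⟨k, hk1, hkn, hkj, rfl⟩ := h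
  exact ⟨k, hk1, hkn, hkj, .rfl, by simp⟩

lemma burnN_mono {j j' : ℕ} (h : j ≤ j') : burnN G s n j ⊆ burnN G s n j' :=
  fun _ ⟨k, hk1, hkn, hkj, hr, hd⟩ => ⟨k, hk1, hkn, hkj.trans h, hr, by omega⟩

lemma mem_burnN_add_one_of_adj {j : ℕ} {u w : V} (hu : u ∈ burnN G s n j) (h : G.Adj u w) :
    w ∈ burnN G s n (j + 1) := by
  obtain ⟨k, hk1, hkn, hkj, hr, hd⟩ := hu
  have := hr.dist_triangle_left w
  rw [dist_eq_one_iff_adj.mpr h] at this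
  exact ⟨k, hk1, hkn, by omega, hr.trans h.reachable, by omega⟩

lemma burnU_subset_of_le (hle : H ≤ G) (j : ℕ) : burnU H s n j ⊆ burnU G s n j :=
  fun _ ⟨k, hk1, hkn, hkj, hr, hd⟩ =>
    ⟨k, hk1, hkn, hkj, hr.mono hle, (hr.dist_anti hle).trans hd⟩

lemma burnU_add_one_self : burnU G s n (n + 1) = burnN G s n (n + 1) := by
  ext w
  exact ⟨fun ⟨k, hk1, hkn, _, hr, hd⟩ => ⟨k, hk1, hkn, by omega, hr, hd⟩,
    fun ⟨k, hk1, hkn, _, hr, hd⟩ => ⟨k, hk1, hkn, by omega, hr, hd⟩⟩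

lemma burnTime_le {j : ℕ} {w : V} (h : w ∈ burnN G s n j) : burnTime G s n w ≤ j :=
  Nat.sInf_le h

lemma mem_burnN_burnTime {j : ℕ} {w : V} (h : w ∈ burnN G s n j) :
    w ∈ burnN G s n (burnTime G s n w) :=
  Nat.sInf_mem (s := {j | w ∈ burnN G s n j}) ⟨j, h⟩

/-- A burnt vertex that is not a source is reached along a shortest path from a source, and
its predecessor on that path burns strictly earlier. -/
lemma isSourceBy_or_exists_adj_burnTime_lt {j : ℕ} {w : V} (h : w ∈ burnN G s n j) :
    IsSourceBy s n (burnTime G s n w) w ∨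
      ∃ u, G.Adj u w ∧ burnTime G s n u < burnTime G s n w := by
  obtain ⟨k, hk1, hkn, hkj, hr, hd⟩ := mem_burnN_burnTime h
  by_cases h0 : G.dist (s k) w = 0
  · exact .inl ⟨k, hk1, hkn, hkj, hr.dist_eq_zero_iff.mp h0⟩
  obtain ⟨u, hadj, hru, hdu⟩ := exists_adj_dist_lt_of_dist_ne_zero h0
  have : burnTime G s n u ≤ burnTime G s n w - 1 :=
    burnTime_le ⟨k, hk1, hkn, by omega, hru, by omega⟩
  exact .inr ⟨u, hadj, by omega⟩

lemma mem_burnN_of_forall_isSourceBy_or_exists_adj_lt (f : V → ℕ)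
    (h : ∀ w, IsSourceBy s n (f w) w ∨ ∃ u, G.Adj u w ∧ f u < f w) (w : V) :
    w ∈ burnN G s n (f w) := by
  induction hfw : f w using Nat.strong_induction_on generalizing w with
  | _ m ih =>
    subst hfw
    rcases h w with hw | ⟨u, hadj, hlt⟩
    · exact hw.mem_burnN
    · exact burnN_mono hlt (mem_burnN_add_one_of_adj (ih _ hlt u rfl) hadj)

end Burning

theorem stmt7_general {V : Type*} (G : SimpleGraph V) (hc : G.Connected)
    (s : ℕ → V) (n : ℕ) (hS : IsBurningSeq G s n) :
    ∃ T : SimpleGraph V, T ≤ G ∧ T.IsTree ∧ IsBurningSeq T s n := by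
  obtain ⟨hn, hfresh, hcover⟩ := hS
  have hburnt : ∀ w, w ∈ burnN G s n (n + 1) := fun w => burnU_add_one_self ▸ hcover w
  obtain ⟨F, hFG, hF, hFstep⟩ := exists_isAcyclic_le_of_forall_or_exists_adj_lt _ _
    fun w => isSourceBy_or_exists_adj_burnTime_lt (hburnt w)
  obtain ⟨T, hFT, hTG, hT⟩ := hc.exists_isTree_le_of_le_of_isAcyclic hFG hF
  have hTstep : ∀ w, IsSourceBy s n (burnTime G s n w) w ∨
      ∃ u, T.Adj u w ∧ burnTime G s n u < burnTime G s n w :=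
    fun w => (hFstep w).imp_right fun ⟨u, hu, hlt⟩ => ⟨u, hFT hu, hlt⟩
  refine ⟨T, hTG, hT, hn, fun j hj2 hjn hj => hfresh j hj2 hjn (burnU_subset_of_le hTG j hj),
    fun w => ?_⟩
  rw [burnU_add_one_self]
  exact burnN_mono (burnTime_le (hburnt w))
    (mem_burnN_of_forall_isSourceBy_or_exists_adj_lt _ hTstep w)

/-- Theorem (spanning tree): a burning sequence of a connected graph `G` is a burning
sequence of some spanning tree of `G`. -/
theorem stmt7 {V : Type*} [Fintype V] (G : SimpleGraph V) (hc : G.Connected)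
    (s : ℕ → V) (n : ℕ) (hS : IsBurningSeq G s n) :
    ∃ T : SimpleGraph V, T ≤ G ∧ T.IsTree ∧ IsBurningSeq T s n :=
  stmt7_general G hc s n hS
end

section
/- Let G be a graph with a burning (lambda, S_G) such that lambda is a burning homomorphism (|lambda(v) - lambda(w)| = 1 for all adjacent v, w). Then for any two burning sources v_i, v_j with i ≠ j, the graph distance satisfies d(v_i, v_j) >= 3. -/
open SimpleGraph

lemma burnTime_source {V : Type*} (G : SimpleGraph V) (s : ℕ → V) (n : ℕ)
    (hS : IsBurningSeq G s n) (k : ℕ) (hk1 : 1 ≤ k) (hk2 : k ≤ n) :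
    burnTime G s n (s k) = k := by
  have hmem : s k ∈ burnN G s n k :=
    ⟨k, hk1, hk2, le_refl k, Reachable.refl _, by simp⟩
  have hne : {j | s k ∈ burnN G s n j}.Nonempty := ⟨k, hmem⟩
  refine le_antisymm (Nat.sInf_le hmem) ?_
  by_contra h
  push_neg at h
  obtain ⟨k', hk'1, hk'n, hk'm, hreach, hdist⟩ := Nat.sInf_mem hne
  have hk'k : k' < k := lt_of_le_of_lt hk'm h
  have hle : G.dist (s k') (s k) ≤ k - k' :=
    le_trans hdist (Nat.sub_le_sub_right (le_of_lt h) k')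
  exact hS.2.1 k (by omega) hk2 ⟨k', hk'1, hk'n, by omega, hreach, hle⟩

lemma stmt9_key {V : Type*} (G : SimpleGraph V) (s : ℕ → V) (n : ℕ)
    (hS : IsBurningHom G s n) (i j : ℕ) (hi1 : 1 ≤ i) (hi2 : i ≤ n)
    (hj2 : j ≤ n) (hij : i < j) (hr : G.Reachable (s i) (s j))
    (hd : G.dist (s i) (s j) ≤ 2) : False := by
  have hnU : s j ∉ burnU G s n j := hS.1.2.1 j (by omega) hj2
  have hgt : ¬ G.dist (s i) (s j) ≤ j - i := fun h =>
    hnU ⟨i, hi1, hi2, by omega, hr, h⟩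
  have hji : j = i + 1 := by omega
  have hd2 : G.dist (s i) (s j) = 2 := by omega
  obtain ⟨p, hp⟩ := hr.exists_walk_length_eq_dist
  rw [hd2] at hp
  have hadj1 : G.Adj (s i) (p.getVert 1) := by
    have := p.adj_getVert_succ (i := 0) (by omega)
    simpa using this
  have hadj2 : G.Adj (p.getVert 1) (s j) := by
    have := p.adj_getVert_succ (i := 1) (by omega)
    have h2 : p.getVert 2 = s j := by
      have := p.getVert_length
      rw [hp] at this
      exact this
    rwa [h2] at this
  have hti : burnTime G s n (s i) = i := burnTime_source G s n hS.1 i hi1 hi2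
  have htj : burnTime G s n (s j) = j := burnTime_source G s n hS.1 j (by omega) hj2
  have h1 := hS.2 (s i) (p.getVert 1) hadj1
  have h2 := hS.2 (p.getVert 1) (s j) hadj2
  rw [hti] at h1
  rw [htj] at h2
  omega

/-- Lemma: if the burning map is a homomorphism then any two distinct burning sources are at
distance at least `3`. -/
theorem stmt9 {V : Type*} (G : SimpleGraph V) (s : ℕ → V) (n : ℕ)
    (hS : IsBurningHom G s n) (i j : ℕ) (hi1 : 1 ≤ i) (hi2 : i ≤ n)
    (hj1 : 1 ≤ j) (hj2 : j ≤ n) (hij : i ≠ j) (hr : G.Reachable (s i) (s j)) :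
    3 ≤ G.dist (s i) (s j) := by
  by_contra h
  push_neg at h
  rcases lt_or_gt_of_ne hij with hlt | hgt
  · exact stmt9_key G s n hS i j hi1 hi2 hj2 hlt hr (by omega)
  · exact stmt9_key G s n hS j i hj1 hj2 hi2 hgt hr.symm
      (by rw [SimpleGraph.dist_comm]; omega)
end

section
/- Every path graph P_n admits a burning homomorphism. Specifically, if n is not divisible by 3, the burning sequence (1, 4, 7, ..., 3k+1, ...) defines a burning whose map lambda satisfies |lambda(i) - lambda(i+1)| = 1 for all i; if n is divisible by 3, the burning sequence (2, 5, 8, ..., 3k+2, ...) does so. -/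
open SimpleGraph

private lemma pg_walk_len {n : ℕ} {u v : Fin n} (p : (SimpleGraph.pathGraph n).Walk u v) :
    (u : ℕ) - (v : ℕ) + ((v : ℕ) - (u : ℕ)) ≤ p.length := by
  induction p with
  | nil => omega
  | @cons a b c h p ih =>
    rw [SimpleGraph.pathGraph_adj] at h
    rw [SimpleGraph.Walk.length_cons]
    omega

private lemma pg_dist_le {n : ℕ} : ∀ (d : ℕ) (u v : Fin (n+1)), (v : ℕ) = (u : ℕ) + d →
    (SimpleGraph.pathGraph (n+1)).dist u v ≤ d := by
  intro d
  induction d with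
  | zero =>
    intro u v h
    have : u = v := Fin.ext (by omega)
    subst this
    simp
  | succ d ih =>
    intro u v h
    have hu1 : (u : ℕ) + 1 < n + 1 := by have := v.isLt; omega
    set u' : Fin (n+1) := ⟨(u : ℕ) + 1, hu1⟩ with hu'
    have hadj : (SimpleGraph.pathGraph (n+1)).Adj u u' :=
      SimpleGraph.pathGraph_adj.mpr (Or.inl rfl)
    have h1 : (SimpleGraph.pathGraph (n+1)).dist u u' ≤ 1 := by
      simpa using SimpleGraph.dist_le hadj.toWalk
    calc (SimpleGraph.pathGraph (n+1)).dist u v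
        ≤ (SimpleGraph.pathGraph (n+1)).dist u u' + (SimpleGraph.pathGraph (n+1)).dist u' v :=
          (SimpleGraph.pathGraph_connected n).dist_triangle
      _ ≤ 1 + d := add_le_add h1 (ih u' v (by simp [hu']; omega))
      _ = d + 1 := by omega

private lemma pg_dist {n : ℕ} (u v : Fin n) :
    (SimpleGraph.pathGraph n).dist u v = (u : ℕ) - (v : ℕ) + ((v : ℕ) - (u : ℕ)) := by
  obtain ⟨n, rfl⟩ : ∃ m, n = m + 1 := ⟨n - 1, by have := u.pos; omega⟩
  apply le_antisymm
  · rcases le_total (u : ℕ) (v : ℕ) with h | h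
    · have := pg_dist_le ((v : ℕ) - (u : ℕ)) u v (by omega)
      omega
    · have := pg_dist_le ((u : ℕ) - (v : ℕ)) v u (by omega)
      rw [SimpleGraph.dist_comm] at this
      omega
  · obtain ⟨p, hp⟩ := (pathGraph_connected n).exists_walk_length_eq_dist u v
    have := pg_walk_len p
    omega

private lemma pg_reach {n : ℕ} (u v : Fin n) : (SimpleGraph.pathGraph n).Reachable u v := by
  obtain ⟨n, rfl⟩ : ∃ m, n = m + 1 := ⟨n - 1, by have := u.pos; omega⟩
  exact (pathGraph_connected n) u v

/-- closed form of the burning map -/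
private def lam (c w : ℕ) : ℕ := if w < c then 2 else (w - c) / 3 + (w - c) % 3 + 1

private lemma burn_main (n m c : ℕ) (hm : 1 ≤ m) (hc : c ≤ 1)
    (h1 : 3 * (m - 1) + c < n) (h2 : n ≤ 3 * m - 1 + c) :
    ∃ s : ℕ → Fin n, IsBurningHom (SimpleGraph.pathGraph n) s m ∧
      ∀ k, 1 ≤ k → k ≤ m → (s k : ℕ) = 3 * (k - 1) + c := by
  have hn : 0 < n := by omega
  set G := SimpleGraph.pathGraph n with hG
  set s : ℕ → Fin n := fun k => if h : 3 * (k - 1) + c < n then ⟨3 * (k - 1) + c, h⟩ else ⟨0, hn⟩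
    with hs
  have hsval : ∀ k, 1 ≤ k → k ≤ m → (s k : ℕ) = 3 * (k - 1) + c := by
    intro k hk1 hkm
    have hlt : 3 * (k - 1) + c < n := by omega
    simp [hs, hlt]
  -- lower bound: every time at which w is burned is at least lam c w
  have hA : ∀ (w : Fin n) (j : ℕ), w ∈ burnN G s m j → lam c (w : ℕ) ≤ j := by
    rintro w j ⟨k, hk1, hkm, hkj, -, hd⟩
    rw [hG, pg_dist, hsval k hk1 hkm] at hd
    simp only [lam]
    split_ifs <;> omega
  -- w is burned at time lam c w
  have hmem : ∀ w : Fin n, w ∈ burnN G s m (lam c (w : ℕ)) := by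
    intro w
    by_cases hw : (w : ℕ) < c
    · refine ⟨1, le_refl 1, hm, ?_, pg_reach _ _, ?_⟩
      · simp [lam, hw]
      · rw [hG, pg_dist, hsval 1 le_rfl hm]
        simp only [lam, if_pos hw]
        omega
    · refine ⟨((w : ℕ) - c) / 3 + 1, by omega, ?_, ?_, pg_reach _ _, ?_⟩
      · have := w.isLt; omega
      · simp only [lam, if_neg hw]; omega
      · rw [hG, pg_dist, hsval _ (by omega) (by have := w.isLt; omega)]
        simp only [lam, if_neg hw]
        omega
  have hBT : ∀ w : Fin n, burnTime G s m w = lam c (w : ℕ) := by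
    intro w
    apply le_antisymm
    · exact Nat.sInf_le (hmem w)
    · have hne : {j | w ∈ burnN G s m j}.Nonempty := ⟨lam c (w : ℕ), hmem w⟩
      exact hA w (burnTime G s m w) (Nat.sInf_mem hne)
  have hlamle : ∀ w : Fin n, lam c (w : ℕ) ≤ m + 1 := by
    intro w
    have := w.isLt
    simp only [lam]
    split_ifs <;> omega
  refine ⟨s, ⟨⟨hm, ?_, ?_⟩, ?_⟩, hsval⟩
  · -- no source is already burned
    rintro j hj2 hjm ⟨k, hk1, hkm, hkj, -, hd⟩
    rw [hG, pg_dist, hsval k hk1 hkm, hsval j (by omega) hjm] at hd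
    omega
  · -- everything burned by time m + 1
    intro w
    obtain ⟨k, hk1, hkm, hkl, hr, hd⟩ := hmem w
    have hl := hlamle w
    exact ⟨k, hk1, hkm, by omega, hr, by omega⟩
  · -- homomorphism property
    intro v w hadj
    rw [hBT, hBT]
    rw [hG, SimpleGraph.pathGraph_adj] at hadj
    simp only [lam]
    split_ifs <;> omega

/-- Every path graph `P_n` admits a burning homomorphism: if `3 ∤ n`, the burning sequence
`(1, 4, 7, …)` works, and if `3 ∣ n`, the burning sequence `(2, 5, 8, …)` works
(here `Fin n` vertex `i` corresponds to the paper's vertex `i + 1`). -/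
theorem stmt10 (n : ℕ) (hn : 1 ≤ n) :
    ∃ (s : ℕ → Fin n) (m : ℕ), IsBurningHom (SimpleGraph.pathGraph n) s m ∧
      m = (n + 2) / 3 ∧
      (¬ 3 ∣ n → ∀ k, 1 ≤ k → k ≤ m → (s k : ℕ) = 3 * (k - 1)) ∧
      (3 ∣ n → ∀ k, 1 ≤ k → k ≤ m → (s k : ℕ) = 3 * (k - 1) + 1) := by
  set m := (n + 2) / 3 with hmdef
  have hm1 : 1 ≤ m := by omega
  by_cases h3 : 3 ∣ n
  · obtain ⟨s, hhom, hval⟩ := burn_main n m 1 hm1 le_rfl (by omega) (by omega)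
    exact ⟨s, m, hhom, rfl, fun h => absurd h3 h, fun _ => hval⟩
  · have h3' : ¬ 3 ∣ n := h3
    obtain ⟨s, hhom, hval⟩ := burn_main n m 0 hm1 (by omega) (by omega) (by omega)
    refine ⟨s, m, hhom, rfl, fun _ => by simpa using hval, fun h => absurd h h3'⟩
end

section
/- The tree T with vertices {1,2,3,4,5,6} and edges {1,3}, {2,3}, {3,4}, {4,5}, {4,6} does not admit any burning homomorphism. -/
open SimpleGraph

/-- The tree with vertices `{1, …, 6}` and edges `{1,3}, {2,3}, {3,4}, {4,5}, {4,6}`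
(here relabelled `0, …, 5`). -/
def T6 : SimpleGraph (Fin 6) :=
  SimpleGraph.fromRel (fun v w =>
    ((v : ℕ), (w : ℕ)) ∈ [(0, 2), (1, 2), (2, 3), (3, 4), (3, 5)])

/- ### Auxiliary material -/

instance : DecidableRel T6.Adj := fun v w =>
  decidable_of_iff _ (SimpleGraph.fromRel_adj _ v w).symm

/-- A `1`-Lipschitz potential grows at most by the length along a walk. -/
lemma pot_walk {V : Type*} {G : SimpleGraph V} (φ : V → ℕ)
    (hφ : ∀ a b, G.Adj a b → φ b ≤ φ a + 1) {u v : V} (p : G.Walk u v) :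
    φ v ≤ φ u + p.length := by
  induction p with
  | nil => simp
  | cons h q ih =>
    have := hφ _ _ h
    simp only [SimpleGraph.Walk.length_cons]
    omega

lemma pot_dist {V : Type*} {G : SimpleGraph V} (φ : V → ℕ)
    (hφ : ∀ a b, G.Adj a b → φ b ≤ φ a + 1) {u v : V} (h : G.Reachable u v) :
    φ v ≤ φ u + G.dist u v := by
  obtain ⟨p, hp⟩ := h.exists_walk_length_eq_dist
  have := pot_walk φ hφ p
  omega

lemma T6_reach : ∀ u v : Fin 6, T6.Reachable u v := by
  have h2 : ∀ v : Fin 6, T6.Reachable 2 v := by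
    intro v
    fin_cases v
    · exact (by decide : T6.Adj 2 0).reachable
    · exact (by decide : T6.Adj 2 1).reachable
    · exact SimpleGraph.Reachable.refl _
    · exact (by decide : T6.Adj 2 3).reachable
    · exact ((by decide : T6.Adj 2 3).reachable).trans ((by decide : T6.Adj 3 4).reachable)
    · exact ((by decide : T6.Adj 2 3).reachable).trans ((by decide : T6.Adj 3 5).reachable)
  intro u v
  exact (h2 u).symm.trans (h2 v)

lemma T6_dist_le_three : ∀ u v : Fin 6, T6.dist u v ≤ 3 := by
  intro u v
  obtain ⟨x, y, h⟩ := (by decide :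
      ∀ u v : Fin 6, ∃ x y : Fin 6, u = v ∨ T6.Adj u v ∨ (T6.Adj u x ∧ T6.Adj x v)
        ∨ (T6.Adj u x ∧ T6.Adj x y ∧ T6.Adj y v)) u v
  rcases h with rfl | h | ⟨h1, h2⟩ | ⟨h1, h2, h3⟩
  · simp [SimpleGraph.dist_self]
  · have := SimpleGraph.dist_le h.toWalk
    simpa using this.trans (by simp)
  · have := SimpleGraph.dist_le (SimpleGraph.Walk.cons h1 (SimpleGraph.Walk.cons h2 SimpleGraph.Walk.nil))
    simp at this; omega
  · have := SimpleGraph.dist_le (SimpleGraph.Walk.cons h1 (SimpleGraph.Walk.cons h2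
      (SimpleGraph.Walk.cons h3 SimpleGraph.Walk.nil)))
    simp at this; omega

/-- Vertices at distance `≥ 3` are a leaf of `{0,1}` and a leaf of `{4,5}`. -/
lemma T6_far (u v : Fin 6) (h : 3 ≤ T6.dist u v) :
    ((u = 0 ∨ u = 1) ∧ (v = 4 ∨ v = 5)) ∨ ((u = 4 ∨ u = 5) ∧ (v = 0 ∨ v = 1)) := by
  rcases (by decide :
      ∀ u v : Fin 6, (u = v ∨ T6.Adj u v ∨ ∃ x, T6.Adj u x ∧ T6.Adj x v) ∨
        (((u = 0 ∨ u = 1) ∧ (v = 4 ∨ v = 5)) ∨ ((u = 4 ∨ u = 5) ∧ (v = 0 ∨ v = 1)))) u v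
    with h' | h'
  · exfalso
    rcases h' with rfl | ha | ⟨x, h1, h2⟩
    · simp [SimpleGraph.dist_self] at h
    · have := SimpleGraph.dist_le ha.toWalk
      simp at this; omega
    · have := SimpleGraph.dist_le (SimpleGraph.Walk.cons h1 (SimpleGraph.Walk.cons h2 SimpleGraph.Walk.nil))
      simp at this; omega
  · exact h'

def phiA : Fin 6 → ℕ := ![0, 0, 1, 2, 3, 3]
def phiB : Fin 6 → ℕ := ![0, 0, 0, 1, 2, 0]
def phiC : Fin 6 → ℕ := ![0, 2, 1, 1, 1, 1]

lemma phiA_lip : ∀ a b, T6.Adj a b → phiA b ≤ phiA a + 1 := by decide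
lemma phiB_lip : ∀ a b, T6.Adj a b → phiB b ≤ phiB a + 1 := by decide
lemma phiC_lip : ∀ a b, T6.Adj a b → phiC b ≤ phiC a + 1 := by decide

/-- Two-sided distance lower bound from a potential. -/
lemma dist_ge (φ : Fin 6 → ℕ) (hφ : ∀ a b, T6.Adj a b → φ b ≤ φ a + 1) (u v : Fin 6) :
    φ v ≤ φ u + T6.dist u v ∧ φ u ≤ φ v + T6.dist u v := by
  refine ⟨pot_dist φ hφ (T6_reach u v), ?_⟩
  have := pot_dist φ hφ (T6_reach v u)
  rwa [SimpleGraph.dist_comm] at this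

/-- Along any walk, a burning homomorphism changes parity with each step. -/
lemma parity_walk {V : Type*} {G : SimpleGraph V} {lam : V → ℕ}
    (hl : ∀ v w, G.Adj v w → ((lam v : ℤ) - lam w).natAbs = 1) :
    ∀ {u v : V} (p : G.Walk u v), (lam u + p.length) % 2 = lam v % 2 := by
  intro u v p
  induction p with
  | nil => simp
  | cons h q ih =>
    have h1 := hl _ _ h
    simp only [SimpleGraph.Walk.length_cons]
    omega

lemma burnTime_source_s11 {s : ℕ → Fin 6} {n : ℕ} (hb : IsBurningSeq T6 s n)
    {j : ℕ} (hj1 : 1 ≤ j) (hjn : j ≤ n) : burnTime T6 s n (s j) = j := by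
  have hmem : j ∈ {i | s j ∈ burnN T6 s n i} :=
    ⟨j, hj1, hjn, le_refl j, T6_reach _ _, by simp [SimpleGraph.dist_self]⟩
  have hle : burnTime T6 s n (s j) ≤ j := Nat.sInf_le hmem
  have hlow : ∀ i, i < j → i ∉ {i | s j ∈ burnN T6 s n i} := by
    intro i hij hi
    obtain ⟨k, hk1, hkn, hki, hr, hd⟩ := hi
    rcases Nat.lt_or_ge j 2 with hj2 | hj2
    · omega
    · exact hb.2.1 j hj2 hjn ⟨k, hk1, hkn, by omega, hr, by omega⟩
  by_contra hne
  exact hlow _ (lt_of_le_of_ne hle hne) (Nat.sInf_mem ⟨j, hmem⟩)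

/-- The tree `T6` does not admit any burning homomorphism. -/
theorem stmt11 : ¬ ∃ (s : ℕ → Fin 6) (n : ℕ), IsBurningHom T6 s n := by
  rintro ⟨s, n, hseq, hhom⟩
  obtain ⟨hn1, hburn, hcov⟩ := hseq
  have par : ∀ u v : Fin 6,
      (burnTime T6 s n u + T6.dist u v) % 2 = burnTime T6 s n v % 2 := by
    intro u v
    obtain ⟨p, hp⟩ := (T6_reach u v).exists_walk_length_eq_dist
    rw [← hp]
    exact parity_walk hhom p
  have hL1 : burnTime T6 s n (s 1) = 1 := burnTime_source_s11 ⟨hn1, hburn, hcov⟩ le_rfl hn1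
  rcases Nat.lt_or_ge n 2 with hn2 | hn2
  · -- n = 1 : the single source cannot cover the graph within radius 1
    obtain ⟨w, hw⟩ := (by decide :
      ∀ u : Fin 6, ∃ w : Fin 6, phiA u + 2 ≤ phiA w ∨ phiA w + 2 ≤ phiA u) (s 1)
    have hd := dist_ge phiA phiA_lip (s 1) w
    obtain ⟨k, hk1, hkn, hk2, hr, hdk⟩ := hcov w
    have hk : k = 1 := by omega
    subst hk
    omega
  rcases Nat.lt_or_ge n 3 with hn3 | hn3
  · -- n = 2
    have hL2 : burnTime T6 s n (s 2) = 2 := burnTime_source_s11 ⟨hn1, hburn, hcov⟩ (by omega) (by omega)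
    have hd12 : 2 ≤ T6.dist (s 1) (s 2) := by
      by_contra hlt
      exact hburn 2 le_rfl (by omega) ⟨1, le_rfl, by omega, by omega, T6_reach _ _, by omega⟩
    have hpar := par (s 1) (s 2)
    rw [hL1, hL2] at hpar
    have h3d : 3 ≤ T6.dist (s 1) (s 2) := by omega
    have hcross := T6_far _ _ h3d
    obtain ⟨w, hwA, hwBC⟩ := (by decide :
      ∀ a b : Fin 6,
        (((a = 0 ∨ a = 1) ∧ (b = 4 ∨ b = 5)) ∨ ((a = 4 ∨ a = 5) ∧ (b = 0 ∨ b = 1))) →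
        ∃ w : Fin 6,
          (phiA w + 3 ≤ phiA a ∨ phiA a + 3 ≤ phiA w) ∧
          ((phiB w + 2 ≤ phiB b ∨ phiB b + 2 ≤ phiB w) ∨
            (phiC w + 2 ≤ phiC b ∨ phiC b + 2 ≤ phiC w))) (s 1) (s 2) hcross
    have hdA := dist_ge phiA phiA_lip (s 1) w
    have hdB := dist_ge phiB phiB_lip (s 2) w
    have hdC := dist_ge phiC phiC_lip (s 2) w
    have hd1w : 3 ≤ T6.dist (s 1) w := by omega
    have hd2w : 2 ≤ T6.dist (s 2) w := by
      rcases hwBC with h | h <;> omega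
    obtain ⟨k, hk1, hkn, hk2, hr, hdk⟩ := hcov w
    have hk : k = 1 ∨ k = 2 := by omega
    rcases hk with rfl | rfl
    · omega
    · omega
  · -- n ≥ 3
    have hL3 : burnTime T6 s n (s 3) = 3 := burnTime_source_s11 ⟨hn1, hburn, hcov⟩ (by omega) hn3
    have hd13 : 3 ≤ T6.dist (s 1) (s 3) := by
      by_contra hlt
      exact hburn 3 (by omega) hn3 ⟨1, le_rfl, by omega, by omega, T6_reach _ _, by omega⟩
    have hpar := par (s 1) (s 3)
    rw [hL1, hL3] at hpar
    have := T6_dist_le_three (s 1) (s 3)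
    omega
end

section
/- Let G be a graph with a burning homomorphism lambda_G given by burning sequence S_G = (v_1, ..., v_n), and let T be a tree with radius r(T) <= n + 1. Then for any vertex v_0 in the center of T, the sequence (v_0, v_1, ..., v_n) is a burning sequence of the disjoint union G + T, and the resulting burning map lambda_{G+T} is a burning homomorphism. -/
open SimpleGraph

/-- The disjoint union of two graphs. -/
def sumGraph {α β : Type*} (G : SimpleGraph α) (H : SimpleGraph β) :
    SimpleGraph (α ⊕ β) where
  Adj x y :=
    match x, y with
    | Sum.inl a, Sum.inl b => G.Adj a b
    | Sum.inr a, Sum.inr b => H.Adj a b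
    | _, _ => False
  symm := ⟨by rintro (a | a) (b | b) h; exacts [h.symm, h.elim, h.elim, h.symm]⟩
  loopless := ⟨by rintro (a | a) h; exacts [G.loopless.irrefl a h, H.loopless.irrefl a h]⟩

/-!
In `G + T` no vertex of one part can reach the other, so the sources `v₁, …, vₙ` burn `G`
exactly as before, one step later, while `v₀` burns `T` at time `1 + dist(v₀, ·)`. The radius
bound makes `T` burn out by time `n + 2`, and in a tree adjacent vertices lie at distances from
`v₀` differing by exactly one.
-/

namespace SimpleGraph

variable {U V W : Type*}

lemma reachable_and_dist_le_iff {G : SimpleGraph V} {u v : V} {m : ℕ} :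
    G.Reachable u v ∧ G.dist u v ≤ m ↔ ∃ p : G.Walk u v, p.length ≤ m := by
  constructor
  · rintro ⟨hr, hd⟩
    obtain ⟨p, hp⟩ := hr.exists_walk_length_eq_dist
    exact ⟨p, hp ▸ hd⟩
  · rintro ⟨p, hp⟩
    exact ⟨⟨p⟩, (dist_le p).trans hp⟩

section ClosedEmbedding

/-! An embedding `f : G ↪g G'` whose image is closed under adjacency identifies `G` with a union
of connected components of `G'`. -/

variable {G : SimpleGraph U} {G' : SimpleGraph V} (f : G ↪g G')
  (hf : ∀ a y, G'.Adj (f a) y → y ∈ Set.range f)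
include hf

lemma Walk.exists_lift_of_adj_closed {x y : V} (p : G'.Walk x y) {a : U} (hx : x = f a) :
    ∃ b, y = f b ∧ ∃ q : G.Walk a b, q.length = p.length := by
  induction p generalizing a with
  | nil => exact ⟨a, hx, .nil, rfl⟩
  | cons h p ih =>
    subst hx
    obtain ⟨c, rfl⟩ := hf a _ h
    obtain ⟨b, rfl, q, hq⟩ := ih rfl
    exact ⟨b, rfl, .cons (f.map_adj_iff.mp h) q, by simp [hq]⟩

lemma mem_range_of_reachable_of_adj_closed {a : U} {y : V} (h : G'.Reachable (f a) y) :
    y ∈ Set.range f := by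
  obtain ⟨p⟩ := h
  obtain ⟨b, rfl, -⟩ := Walk.exists_lift_of_adj_closed f hf p rfl
  exact ⟨b, rfl⟩

lemma reachable_and_dist_le_iff_of_adj_closed {a b : U} {m : ℕ} :
    G'.Reachable (f a) (f b) ∧ G'.dist (f a) (f b) ≤ m ↔ G.Reachable a b ∧ G.dist a b ≤ m := by
  simp only [reachable_and_dist_le_iff]
  constructor
  · rintro ⟨p, hp⟩
    obtain ⟨b', hb', q, hq⟩ := Walk.exists_lift_of_adj_closed f hf p rfl
    obtain rfl := f.injective hb'
    exact ⟨q, hq ▸ hp⟩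
  · rintro ⟨q, hq⟩
    exact ⟨q.map f.toHom, by simpa using hq⟩

end ClosedEmbedding

section Sum

variable {G : SimpleGraph V} {H : SimpleGraph W}

lemma sumGraph_eq_sum : sumGraph G H = G ⊕g H := by
  ext (a | a) (b | b) <;> simp [sumGraph]

lemma mem_range_sumInl_of_adj (a : V) (y : V ⊕ W) (h : (G ⊕g H).Adj (.inl a) y) :
    y ∈ Set.range (Embedding.sumInl (G := G) (H := H)) := by
  cases y <;> simp_all

lemma mem_range_sumInr_of_adj (a : W) (y : V ⊕ W) (h : (G ⊕g H).Adj (.inr a) y) :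
    y ∈ Set.range (Embedding.sumInr (G := G) (H := H)) := by
  cases y <;> simp_all

lemma sum_reachable_and_dist_le_inl_iff {a b : V} {m : ℕ} :
    (G ⊕g H).Reachable (.inl a) (.inl b) ∧ (G ⊕g H).dist (.inl a) (.inl b) ≤ m ↔
      G.Reachable a b ∧ G.dist a b ≤ m :=
  reachable_and_dist_le_iff_of_adj_closed Embedding.sumInl mem_range_sumInl_of_adj

lemma sum_reachable_and_dist_le_inr_iff {a b : W} {m : ℕ} :
    (G ⊕g H).Reachable (.inr a) (.inr b) ∧ (G ⊕g H).dist (.inr a) (.inr b) ≤ m ↔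
      H.Reachable a b ∧ H.dist a b ≤ m :=
  reachable_and_dist_le_iff_of_adj_closed Embedding.sumInr mem_range_sumInr_of_adj

lemma sum_not_reachable_inl_inr (a : V) (b : W) : ¬ (G ⊕g H).Reachable (.inl a) (.inr b) := by
  intro h
  obtain ⟨c, hc⟩ := mem_range_of_reachable_of_adj_closed Embedding.sumInl mem_range_sumInl_of_adj h
  simp at hc

lemma sum_not_reachable_inr_inl (a : W) (b : V) : ¬ (G ⊕g H).Reachable (.inr a) (.inl b) :=
  fun h => sum_not_reachable_inl_inr b a h.symm

end Sum

end SimpleGraph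

section Burning

open SimpleGraph

variable {V W : Type*} {G : SimpleGraph V} {H : SimpleGraph W} {s : ℕ → V} {n c j : ℕ}

def burnSet (G : SimpleGraph V) (s : ℕ → V) (n c j : ℕ) : Set V :=
  {w | ∃ k, 1 ≤ k ∧ k ≤ n ∧ k + c ≤ j ∧ G.Reachable (s k) w ∧ G.dist (s k) w ≤ j - k}

lemma burnN_eq_burnSet : burnN G s n j = burnSet G s n 0 j := rfl

lemma burnU_eq_burnSet : burnU G s n j = burnSet G s n 1 j := rfl

lemma burnU_subset_burnN : burnU G s n j ⊆ burnN G s n j :=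
  fun _ ⟨k, hk, hkn, hkj, hr, hd⟩ => ⟨k, hk, hkn, by omega, hr, hd⟩

def prependSeq (v₀ : W) (s : ℕ → V) : ℕ → V ⊕ W :=
  fun k => if k = 1 then .inr v₀ else .inl (s (k - 1))

lemma prependSeq_succ (v₀ : W) {k : ℕ} (hk : 1 ≤ k) : prependSeq v₀ s (k + 1) = .inl (s k) := by
  simp [prependSeq, Nat.ne_zero_of_lt hk]

lemma inl_mem_burnSet_prependSeq {v₀ : W} {a : V} :
    .inl a ∈ burnSet (G ⊕g H) (prependSeq v₀ s) (n + 1) c j ↔ a ∈ burnSet G s n c (j - 1) := by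
  constructor
  · rintro ⟨_ | _ | k, hk, hkn, hkj, hr, hd⟩
    · omega
    · exact absurd hr (sum_not_reachable_inr_inl _ _)
    · rw [prependSeq_succ _ (by omega)] at hr hd
      obtain ⟨hr, hd⟩ := sum_reachable_and_dist_le_inl_iff.mp ⟨hr, hd⟩
      exact ⟨k + 1, by omega, by omega, by omega, hr, by omega⟩
  · rintro ⟨k, hk, hkn, hkj, hr, hd⟩
    refine ⟨k + 1, by omega, by omega, by omega, ?_⟩
    rw [prependSeq_succ _ hk, sum_reachable_and_dist_le_inl_iff]
    exact ⟨hr, by omega⟩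

lemma inr_mem_burnSet_prependSeq {v₀ b : W} :
    .inr b ∈ burnSet (G ⊕g H) (prependSeq v₀ s) (n + 1) c j ↔
      1 + c ≤ j ∧ H.Reachable v₀ b ∧ H.dist v₀ b ≤ j - 1 := by
  constructor
  · rintro ⟨_ | _ | k, hk, hkn, hkj, hr, hd⟩
    · omega
    · exact ⟨hkj, sum_reachable_and_dist_le_inr_iff.mp ⟨hr, hd⟩⟩
    · exact absurd hr (sum_not_reachable_inl_inr _ _)
  · rintro ⟨hj, hbd⟩
    exact ⟨1, le_rfl, by omega, hj, sum_reachable_and_dist_le_inr_iff.mpr hbd⟩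

lemma burnTime_prependSeq_inl {v₀ : W} {a : V} (ha : ∃ i, a ∈ burnN G s n i) :
    burnTime (G ⊕g H) (prependSeq v₀ s) (n + 1) (.inl a) = burnTime G s n a + 1 := by
  have hpos : 0 < burnTime G s n a := by
    refine Nat.pos_of_ne_zero fun h => ?_
    rcases Nat.sInf_eq_zero.mp h with ⟨k, hk, -, hk0, -⟩ | hempty
    · omega
    · exact Set.not_nonempty_iff_eq_empty.mpr hempty ha
  simp only [burnTime, burnN_eq_burnSet, inl_mem_burnSet_prependSeq]
  exact (Nat.sInf_add' hpos).symm

lemma burnTime_prependSeq_inr {v₀ b : W} (hb : H.Reachable v₀ b) :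
    burnTime (G ⊕g H) (prependSeq v₀ s) (n + 1) (.inr b) = H.dist v₀ b + 1 := by
  have : {j | .inr b ∈ burnN (G ⊕g H) (prependSeq v₀ s) (n + 1) j} = Set.Ici (H.dist v₀ b + 1) := by
    ext j
    simp only [Set.mem_ofPred_eq, burnN_eq_burnSet, inr_mem_burnSet_prependSeq, Set.mem_Ici]
    grind
  rw [burnTime, this, csInf_Ici]

lemma IsBurningSeq.sum_prependSeq (hs : IsBurningSeq G s n) {v₀ : W}
    (hv₀ : ∀ b, H.Reachable v₀ b ∧ H.dist v₀ b ≤ n + 1) :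
    IsBurningSeq (G ⊕g H) (prependSeq v₀ s) (n + 1) := by
  obtain ⟨hn, hsrc, hcov⟩ := hs
  refine ⟨by omega, fun j hj2 hjn => ?_, ?_⟩
  · obtain ⟨j, rfl⟩ : ∃ i, j = i + 1 := ⟨j - 1, by omega⟩
    rw [prependSeq_succ _ (by omega), burnU_eq_burnSet, inl_mem_burnSet_prependSeq,
      Nat.add_sub_cancel]
    rcases (by omega : j = 1 ∨ 2 ≤ j) with rfl | hj
    · rintro ⟨k, hk, -, hk1, -⟩
      omega
    · exact hsrc j hj (by omega)
  · rintro (a | b)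
    · rw [burnU_eq_burnSet, inl_mem_burnSet_prependSeq]
      exact hcov a
    · rw [burnU_eq_burnSet, inr_mem_burnSet_prependSeq]
      exact ⟨by omega, hv₀ b⟩

lemma IsBurningHom.sum_prependSeq (hs : IsBurningHom G s n) (hH : H.IsTree) {v₀ : W}
    (hrad : ∀ b, H.dist v₀ b ≤ n + 1) :
    IsBurningHom (G ⊕g H) (prependSeq v₀ s) (n + 1) := by
  refine ⟨hs.1.sum_prependSeq fun b => ⟨hH.connected v₀ b, hrad b⟩, ?_⟩
  have hburnt (a : V) : ∃ i, a ∈ burnN G s n i := ⟨n + 1, burnU_subset_burnN (hs.1.2.2 a)⟩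
  rintro (a | a) (b | b) hadj
  · rw [burnTime_prependSeq_inl (hburnt a), burnTime_prependSeq_inl (hburnt b)]
    have := hs.2 a b hadj
    omega
  · simp at hadj
  · simp at hadj
  · rw [burnTime_prependSeq_inr (hH.connected v₀ a), burnTime_prependSeq_inr (hH.connected v₀ b)]
    rcases hH.dist_eq_dist_add_one_of_adj v₀ hadj with h | h <;> omega

end Burning

theorem stmt14_general {V W : Type*} [Fintype W]
    (G : SimpleGraph V) (Tg : SimpleGraph W) (hT : Tg.IsTree)
    (s : ℕ → V) (n : ℕ) (hG : IsBurningHom G s n) (v0 : W)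
    (hrad : Finset.univ.sup (Tg.dist v0) ≤ n + 1) :
    IsBurningHom (sumGraph G Tg)
      (fun k => if k = 1 then Sum.inr v0 else Sum.inl (s (k - 1))) (n + 1) := by
  rw [sumGraph_eq_sum]
  exact hG.sum_prependSeq hT fun b => (Finset.le_sup (Finset.mem_univ b)).trans hrad

/-- Theorem: if `G` has a burning homomorphism with sources `(v_1, …, v_n)` and `T` is a tree
of radius at most `n + 1`, then for any vertex `v_0` of the center of `T` the sequence
`(v_0, v_1, …, v_n)` defines a burning homomorphism of the disjoint union `G + T`. -/
theorem stmt14 {V W : Type*} [Fintype V] [Fintype W]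
    (G : SimpleGraph V) (Tg : SimpleGraph W) (hT : Tg.IsTree)
    (s : ℕ → V) (n : ℕ) (hG : IsBurningHom G s n) (v0 : W)
    (hcen : ∀ w : W, Finset.univ.sup (Tg.dist v0) ≤ Finset.univ.sup (Tg.dist w))
    (hrad : Finset.univ.sup (Tg.dist v0) ≤ n + 1) :
    IsBurningHom (sumGraph G Tg)
      (fun k => if k = 1 then Sum.inr v0 else Sum.inl (s (k - 1))) (n + 1) :=
  stmt14_general G Tg hT s n hG v0 hrad
end

section
/- Let P_n (n >= 2) be a path graph and let S_P be a burning sequence defining a burning homomorphism of P_n. Then ceil((sqrt(4n - 3) - 1)/2) <= |S_P| <= ceil(n/3), and both bounds are attained for every n. -/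
open SimpleGraph

section aux
open Finset

lemma pg_conn {n : ℕ} (hn : 1 ≤ n) : (pathGraph n).Connected := by
  obtain ⟨m, rfl⟩ := Nat.exists_eq_add_of_le' hn
  simpa using pathGraph_connected m

lemma pg_walk_ge {n : ℕ} : ∀ {a b : Fin n} (p : (pathGraph n).Walk a b),
    a.val - b.val + (b.val - a.val) ≤ p.length := by
  intro a b p
  induction p with
  | nil => simp
  | cons h q ih =>
    rw [pathGraph_adj] at h
    simp only [SimpleGraph.Walk.length_cons]
    omega

lemma pg_dist_le' {n : ℕ} (hn : 1 ≤ n) : ∀ (d : ℕ) (a b : Fin n), a.val + d = b.val →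
    (pathGraph n).dist a b ≤ d := by
  intro d
  induction d with
  | zero => intro a b h; have : a = b := Fin.ext (by omega); simp [this]
  | succ d ih =>
    intro a b h
    have hlt : a.val + 1 < n := by have := b.isLt; omega
    set c : Fin n := ⟨a.val + 1, hlt⟩ with hc
    have hadj : (pathGraph n).Adj a c := pathGraph_adj.2 (Or.inl rfl)
    calc (pathGraph n).dist a b ≤ (pathGraph n).dist a c + (pathGraph n).dist c b :=
          (pg_conn hn).dist_triangle
    _ ≤ d + 1 := by
        have h1 : (pathGraph n).dist a c = 1 := dist_eq_one_iff_adj.2 hadj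
        have h2 : (pathGraph n).dist c b ≤ d := ih c b (by simp [hc]; omega)
        omega

lemma pg_dist_s15 {n : ℕ} (hn : 1 ≤ n) (a b : Fin n) :
    (pathGraph n).dist a b = a.val - b.val + (b.val - a.val) := by
  apply le_antisymm
  · rcases le_total a.val b.val with h | h
    · have := pg_dist_le' hn (b.val - a.val) a b (by omega)
      omega
    · have := pg_dist_le' hn (a.val - b.val) b a (by omega)
      rw [dist_comm] at this; omega
  · obtain ⟨p, hp⟩ := ((pg_conn hn).preconnected a b).exists_walk_length_eq_dist
    have := pg_walk_ge p
    omega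

lemma icc_ne {k : ℕ} (hk : 1 ≤ k) : (Finset.Icc 1 k).Nonempty := ⟨1, by simp [hk]⟩

lemma burnTime_eq {n k : ℕ} (hn : 1 ≤ n) (hk : 1 ≤ k) (s : ℕ → Fin n) (x : Fin n) :
    burnTime (pathGraph n) s k x
      = (Finset.Icc 1 k).inf' (icc_ne hk) (fun t => t + (pathGraph n).dist (s t) x) := by
  set μ := (Finset.Icc 1 k).inf' (icc_ne hk) (fun t => t + (pathGraph n).dist (s t) x) with hμ
  have hset : {j | x ∈ burnN (pathGraph n) s k j} = {j | μ ≤ j} := by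
    ext j
    simp only [Set.mem_setOf_eq, burnN]
    constructor
    · rintro ⟨t, ht1, htk, htj, -, hd⟩
      calc μ ≤ t + (pathGraph n).dist (s t) x := Finset.inf'_le _ (by simp [ht1, htk])
      _ ≤ j := by omega
    · intro hj
      obtain ⟨t, htm, hteq⟩ := Finset.exists_mem_eq_inf' (icc_ne hk)
        (fun t => t + (pathGraph n).dist (s t) x)
      simp only [Finset.mem_Icc] at htm
      refine ⟨t, htm.1, htm.2, by omega, (pg_conn hn).preconnected _ _, by omega⟩
  rw [burnTime, hset]
  apply le_antisymm
  · exact Nat.sInf_le (by simp)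
  · exact le_csInf ⟨μ, by simp⟩ (fun b hb => hb)

lemma spacing_aux (p : ℕ → ℕ) : ∀ (c : ℕ) (S : Finset ℕ) (n : ℕ), S.card = c →
    (∀ i ∈ S, ∀ j ∈ S, i ≠ j → p i + 3 ≤ p j ∨ p j + 3 ≤ p i) →
    (∀ j ∈ S, p j < n) → 3 * c ≤ n + 2 := by
  intro c
  induction c with
  | zero => intro S n _ _ _; omega
  | succ c ih =>
    intro S n hcard hsep hlt
    have hne : S.Nonempty := by rw [← Finset.card_pos]; omega
    obtain ⟨j₀, hj₀S, hmax⟩ := Finset.exists_max_image S p hne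
    have hrec := ih (S.erase j₀) (n - 3) (by rw [Finset.card_erase_of_mem hj₀S]; omega)
      (fun i hi j hj hij => hsep i (Finset.mem_of_mem_erase hi) j (Finset.mem_of_mem_erase hj) hij)
      ?_
    · have := hlt j₀ hj₀S
      rcases Finset.eq_empty_or_nonempty (S.erase j₀) with he | ⟨j₁, hj₁⟩
      · have hc0 : (S.erase j₀).card = c := by rw [Finset.card_erase_of_mem hj₀S]; omega
        rw [he, Finset.card_empty] at hc0
        omega
      · have h1 := hsep j₁ (Finset.mem_of_mem_erase hj₁) j₀ hj₀S (Finset.ne_of_mem_erase hj₁)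
        have h2 := hmax j₁ (Finset.mem_of_mem_erase hj₁)
        omega
    · intro j hj
      have h1 := hsep j (Finset.mem_of_mem_erase hj) j₀ hj₀S (Finset.ne_of_mem_erase hj)
      have h2 := hmax j (Finset.mem_of_mem_erase hj)
      have h3 := hlt j₀ hj₀S
      omega

lemma cover_aux (p : ℕ → ℕ) (k : ℕ) : ∀ (c : ℕ) (S : Finset ℕ) (m : ℕ), S.card = c →
    S ⊆ Finset.Icc 1 k →
    (∀ i ∈ S, ∀ j ∈ S, (p i + i) % 2 = (p j + j) % 2) →
    (∀ x, x < m → ∃ j ∈ S, p j ≤ x + (k + 1 - j) ∧ x ≤ p j + (k + 1 - j)) →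
    m + c ≤ 1 + ∑ j ∈ S, (2 * (k + 1 - j) + 1) := by
  intro c
  induction c with
  | zero =>
    intro S m hcard hsub hpar hcov
    rw [Finset.card_eq_zero] at hcard
    subst hcard
    rcases Nat.eq_zero_or_pos m with h | h
    · simp [h]
    · obtain ⟨j, hj, -⟩ := hcov 0 h
      simp at hj
  | succ c ih =>
    intro S m hcard hsub hpar hcov
    have hne : S.Nonempty := by rw [← Finset.card_pos]; omega
    obtain ⟨j₀, hj₀S, hmax⟩ := Finset.exists_max_image S (fun j => p j + (k + 1 - j)) hne
    have hj₀k : 1 ≤ j₀ ∧ j₀ ≤ k := by have := hsub hj₀S; simpa using this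
    set r₀ := k + 1 - j₀ with hr₀
    have hr₀1 : 1 ≤ r₀ := by omega
    have hsum : ∑ j ∈ S, (2 * (k + 1 - j) + 1)
        = (2 * r₀ + 1) + ∑ j ∈ S.erase j₀, (2 * (k + 1 - j) + 1) := by
      rw [← Finset.add_sum_erase _ _ hj₀S]
    have hcard' : (S.erase j₀).card = c := by rw [Finset.card_erase_of_mem hj₀S]; omega
    have hsub' : S.erase j₀ ⊆ Finset.Icc 1 k := fun j hj => hsub (Finset.mem_of_mem_erase hj)
    have hpar' : ∀ i ∈ S.erase j₀, ∀ j ∈ S.erase j₀, (p i + i) % 2 = (p j + j) % 2 :=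
      fun i hi j hj => hpar i (Finset.mem_of_mem_erase hi) j (Finset.mem_of_mem_erase hj)
    have hmtop : m ≤ p j₀ + r₀ + 1 := by
      rcases Nat.eq_zero_or_pos m with h | h
      · omega
      · obtain ⟨j, hj, h1, h2⟩ := hcov (m - 1) (by omega)
        have := hmax j hj
        omega
    have hemin : ∀ j ∈ S.erase j₀, 1 ≤ 2 * (k + 1 - j) + 1 := fun j hj => by omega
    have hsum_ge : c ≤ ∑ j ∈ S.erase j₀, (2 * (k + 1 - j) + 1) := by
      have h0 : ∑ _j ∈ S.erase j₀, 1 ≤ ∑ j ∈ S.erase j₀, (2 * (k + 1 - j) + 1) :=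
        Finset.sum_le_sum hemin
      rwa [Finset.sum_const, smul_eq_mul, mul_one, hcard'] at h0
    by_cases hcase : p j₀ ≤ r₀
    · -- case a
      omega
    · -- case b : p j₀ > r₀
      push_neg at hcase
      set m' := min m (p j₀ - r₀ + 1) with hm'
      have hcov' : ∀ x, x < m' → ∃ j ∈ S.erase j₀,
          p j ≤ x + (k + 1 - j) ∧ x ≤ p j + (k + 1 - j) := by
        intro x hx
        rcases Nat.lt_or_ge x (p j₀ - r₀) with hxl | hxe
        · obtain ⟨j, hj, h1, h2⟩ := hcov x (by omega)
          have hjne : j ≠ j₀ := by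
            intro h; subst h; omega
          exact ⟨j, Finset.mem_erase.2 ⟨hjne, hj⟩, h1, h2⟩
        · -- x = p j₀ - r₀, and x < m, so y := x - 1 < m
          have hxeq : x = p j₀ - r₀ := by omega
          have hylt : p j₀ - r₀ - 1 < m := by omega
          obtain ⟨j, hj, h1, h2⟩ := hcov (p j₀ - r₀ - 1) hylt
          have hjne : j ≠ j₀ := by intro h; subst h; omega
          have hjk : 1 ≤ j ∧ j ≤ k := by have := hsub hj; simpa using this
          have hpj := hpar j hj j₀ hj₀S
          have hmj := hmax j hj
          refine ⟨j, Finset.mem_erase.2 ⟨hjne, hj⟩, by omega, by omega⟩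
      have hrec := ih (S.erase j₀) m' hcard' hsub' hpar' hcov'
      omega

lemma sum_odd (k : ℕ) : ∑ j ∈ Finset.Icc 1 k, (2 * j + 1) = k * k + 2 * k := by
  induction k with
  | zero => simp
  | succ k ih =>
    rw [Finset.sum_Icc_succ_top (by omega), ih]
    ring

lemma sum_radii (k : ℕ) : ∑ j ∈ Finset.Icc 1 k, (2 * (k + 1 - j) + 1) = k * k + 2 * k := by
  have h1 : ∑ j ∈ Finset.Icc 1 k, (2 * (k + 1 - j) + 1) = ∑ j ∈ Finset.Icc 1 k, (2 * j + 1) := by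
    apply Finset.sum_nbij' (fun i => k + 1 - i) (fun i => k + 1 - i) <;>
      intro a ha <;> simp only [Finset.mem_Icc] at * <;> omega
  rw [h1, sum_odd]


section extract
variable {n k : ℕ} {s : ℕ → Fin n}

lemma bounds_of_hom (hn : 2 ≤ n) (hhom : IsBurningHom (pathGraph n) s k) :
    3 * k ≤ n + 2 ∧ n ≤ k * k + k + 1 := by
  obtain ⟨⟨hk, hU, hcov⟩, hhom2⟩ := hhom
  have hn1 : 1 ≤ n := by omega
  -- source distances
  have hA : ∀ i j, 1 ≤ i → i < j → j ≤ k →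
      j - i < (s i).val - (s j).val + ((s j).val - (s i).val) := by
    intro i j hi hij hjk
    by_contra hcon
    exact hU j (by omega) hjk ⟨i, hi, by omega, by omega,
      (pg_conn hn1).preconnected _ _, by rw [pg_dist_s15 hn1]; omega⟩
  -- burn times of sources
  have hlam : ∀ i, 1 ≤ i → i ≤ k → burnTime (pathGraph n) s k (s i) = i := by
    intro i hi hik
    rw [burnTime_eq hn1 hk]
    apply le_antisymm
    · calc ((Finset.Icc 1 k).inf' (icc_ne hk) fun t => t + (pathGraph n).dist (s t) (s i))
          ≤ i + (pathGraph n).dist (s i) (s i) :=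
            Finset.inf'_le _ (Finset.mem_Icc.2 ⟨hi, hik⟩)
      _ = i := by rw [SimpleGraph.dist_self]; omega
    · obtain ⟨t, htm, hteq⟩ := Finset.exists_mem_eq_inf' (icc_ne hk)
        (fun t => t + (pathGraph n).dist (s t) (s i))
      rw [hteq]
      simp only [Finset.mem_Icc] at htm
      rcases Nat.lt_or_ge t i with htl | htg
      · have := hA t i htm.1 htl hik
        rw [pg_dist_s15 hn1]
        omega
      · omega
  -- parity of burn times
  have hpar0 : ∀ m (hm : m < n),
      (burnTime (pathGraph n) s k ⟨m, hm⟩ + m) % 2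
        = (burnTime (pathGraph n) s k ⟨0, by omega⟩) % 2 := by
    intro m
    induction m with
    | zero => intro hm; rfl
    | succ m ih =>
      intro hm
      have hm' : m < n := by omega
      have hadj : (pathGraph n).Adj ⟨m, hm'⟩ ⟨m + 1, hm⟩ := pathGraph_adj.2 (Or.inl rfl)
      have h1 := hhom2 _ _ hadj
      have h2 := ih hm'
      omega
  have hparv : ∀ x : Fin n, (burnTime (pathGraph n) s k x + x.val) % 2
      = (burnTime (pathGraph n) s k ⟨0, by omega⟩) % 2 := by
    intro x
    have h := hpar0 x.val x.isLt
    have hx : (⟨x.val, x.isLt⟩ : Fin n) = x := rfl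
    rw [hx] at h
    exact h
  have hparS : ∀ i ∈ Finset.Icc 1 k, ∀ j ∈ Finset.Icc 1 k,
      ((s i).val + i) % 2 = ((s j).val + j) % 2 := by
    intro i hi j hj
    simp only [Finset.mem_Icc] at hi hj
    have h1 := hparv (s i)
    have h2 := hparv (s j)
    rw [hlam i hi.1 hi.2] at h1
    rw [hlam j hj.1 hj.2] at h2
    omega
  constructor
  · -- spacing
    refine spacing_aux (fun t => (s t).val) k (Finset.Icc 1 k) n (by simp) ?_ ?_
    · intro i hi j hj hij
      show (s i).val + 3 ≤ (s j).val ∨ (s j).val + 3 ≤ (s i).val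
      have hp := hparS i hi j hj
      simp only [Finset.mem_Icc] at hi hj
      rcases Nat.lt_or_ge i j with h | h
      · have := hA i j hi.1 h hj.2
        omega
      · have := hA j i hj.1 (by omega) hi.2
        omega
    · intro j _
      exact (s j).isLt
  · -- covering
    have h := cover_aux (fun t => (s t).val) k k (Finset.Icc 1 k) n (by simp)
      (fun j hj => hj) hparS ?_
    · rw [sum_radii] at h
      omega
    · intro x hx
      obtain ⟨t, ht1, htk, -, -, hd⟩ := hcov ⟨x, hx⟩
      rw [pg_dist_s15 hn1] at hd
      have hv : ((⟨x, hx⟩ : Fin n) : ℕ) = x := rfl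
      rw [hv] at hd
      refine ⟨t, Finset.mem_Icc.2 ⟨ht1, htk⟩, ?_, ?_⟩
      · show (s t).val ≤ x + (k + 1 - t)
        omega
      · show x ≤ (s t).val + (k + 1 - t)
        omega

end extract


lemma build_hom {n k : ℕ} (hn : 2 ≤ n) (hk : 1 ≤ k) (p : ℕ → ℕ)
    (hlt : ∀ j, 1 ≤ j → j ≤ k → p j < n)
    (hA : ∀ i j, 1 ≤ i → i < j → j ≤ k → j - i < p i - p j + (p j - p i))
    (hB : ∀ x, x < n → ∃ j, 1 ≤ j ∧ j ≤ k ∧ p j ≤ x + (k + 1 - j) ∧ x ≤ p j + (k + 1 - j))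
    (hP : ∀ i, 1 ≤ i → i ≤ k → (p i + i) % 2 = (p 1 + 1) % 2) :
    ∃ s : ℕ → Fin n, IsBurningHom (pathGraph n) s k := by
  have hn1 : 1 ≤ n := by omega
  refine ⟨fun j => if h : 1 ≤ j ∧ j ≤ k then ⟨p j, hlt j h.1 h.2⟩ else ⟨0, by omega⟩, ?_⟩
  set s : ℕ → Fin n :=
    fun j => if h : 1 ≤ j ∧ j ≤ k then ⟨p j, hlt j h.1 h.2⟩ else ⟨0, by omega⟩ with hsdef
  have hs : ∀ j, 1 ≤ j → j ≤ k → (s j).val = p j := by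
    intro j h1 h2
    simp only [hsdef, dif_pos (And.intro h1 h2)]
  have key : ∀ v : Fin n, (burnTime (pathGraph n) s k v + v.val) % 2 = (p 1 + 1) % 2 := by
    intro v
    rw [burnTime_eq hn1 hk]
    obtain ⟨t, htm, hteq⟩ := Finset.exists_mem_eq_inf' (icc_ne hk)
      (fun t => t + (pathGraph n).dist (s t) v)
    rw [hteq]
    simp only [Finset.mem_Icc] at htm
    have h1 := hP t htm.1 htm.2
    have h2 := hs t htm.1 htm.2
    rw [pg_dist_s15 hn1]
    omega
  have lip : ∀ v w : Fin n, (pathGraph n).Adj v w →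
      burnTime (pathGraph n) s k v ≤ burnTime (pathGraph n) s k w + 1 := by
    intro v w hadj
    rw [burnTime_eq hn1 hk, burnTime_eq hn1 hk]
    obtain ⟨t, htm, hteq⟩ := Finset.exists_mem_eq_inf' (icc_ne hk)
      (fun t => t + (pathGraph n).dist (s t) w)
    rw [hteq]
    have hd := pathGraph_adj.1 hadj
    calc ((Finset.Icc 1 k).inf' (icc_ne hk) fun t => t + (pathGraph n).dist (s t) v)
        ≤ t + (pathGraph n).dist (s t) v := Finset.inf'_le _ htm
    _ ≤ t + (pathGraph n).dist (s t) w + 1 := by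
        rw [pg_dist_s15 hn1, pg_dist_s15 hn1]
        omega
  constructor
  · refine ⟨hk, ?_, ?_⟩
    · rintro j hj2 hjk ⟨t, ht1, htk, htj, -, hd⟩
      rw [pg_dist_s15 hn1] at hd
      have e1 := hs j (by omega) hjk
      have e2 := hs t ht1 htk
      have := hA t j ht1 (by omega) hjk
      omega
    · intro w
      obtain ⟨j, hj1, hjk, hc1, hc2⟩ := hB w.val w.isLt
      refine ⟨j, hj1, hjk, by omega, (pg_conn hn1).preconnected _ _, ?_⟩
      rw [pg_dist_s15 hn1]
      have := hs j hj1 hjk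
      omega
  · intro v w hadj
    have l1 := lip v w hadj
    have l2 := lip w v hadj.symm
    have k1 := key v
    have k2 := key w
    have hd := pathGraph_adj.1 hadj
    omega

/-- position of the `(i+1)`-st source (`i = 0, …, k-1`). -/
def posf (k h a i : ℕ) : ℕ := min (k - h + i * (2 * k - i)) (a + 3 * i)

lemma posf_step (k h a i : ℕ) (hik : i + 1 ≤ k) :
    k - h + (i + 1) * (2 * k - (i + 1)) = (k - h + i * (2 * k - i)) + (2 * (k - i) - 1) := by
  have c1 : i + 1 ≤ 2 * k := by omega
  have c2 : i ≤ 2 * k := by omega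
  have c4 : i ≤ k := by omega
  have c5 : 1 ≤ 2 * (k - i) := by omega
  zify [c1, c2, c4, c5]
  ring

lemma posf_gap (k h a i : ℕ) (hik : i + 2 ≤ k) :
    posf k h a i + 3 ≤ posf k h a (i + 1) ∧
      posf k h a (i + 1) ≤ posf k h a i + (2 * (k - i) - 1) := by
  have hstep := posf_step k h a i (by omega)
  unfold posf
  omega

lemma posf_mono (k h a : ℕ) : ∀ j, j + 1 ≤ k → ∀ i, i ≤ j →
    posf k h a i + 3 * (j - i) ≤ posf k h a j := by
  intro j
  induction j with
  | zero => intro _ i hi; interval_cases i; omega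
  | succ j ih =>
    intro hjk i hi
    rcases Nat.lt_or_ge i (j + 1) with hc | hc
    · have h1 := ih (by omega) i (by omega)
      have h2 := (posf_gap k h a j (by omega)).1
      omega
    · have : i = j + 1 := by omega
      subst this
      omega

lemma even_helper (k i : ℕ) (hi : i ≤ 2 * k) : (i * (2 * k - i + 1)) % 2 = 0 := by
  rcases Nat.even_or_odd i with he | ho
  · exact Nat.even_iff.1 (he.mul_right _)
  · have h1 : Odd (2 * k - i) := Nat.Even.sub_odd hi (even_two_mul k) ho
    have h2 : Even (2 * k - i + 1) := Odd.add_one h1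
    exact Nat.even_iff.1 (h2.mul_left _)

lemma posf_par (k h a i : ℕ) (hik : i ≤ k) (hh : h ≤ k)
    (hak : (a + k + h) % 2 = 0) : (posf k h a i + i) % 2 = (k + h) % 2 := by
  have he := even_helper k i (by omega)
  have hexp : i * (2 * k - i) + i = i * (2 * k - i + 1) := by ring
  unfold posf
  omega

lemma posf_lastval (k h a : ℕ) (hk : 1 ≤ k) (hh : h ≤ k) :
    k - h + (k - 1) * (2 * k - (k - 1)) + h + 1 = k * k + k := by
  have c1 : k - 1 ≤ 2 * k := by omega
  zify [c1, hh, hk]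
  ring

lemma even_kk (k : ℕ) : (k * k + k) % 2 = 0 := by
  have h : k * k + k = k * (k + 1) := by ring
  rw [h]
  exact Nat.even_iff.1 (Nat.even_mul_succ_self k)

lemma construct_aux (k n a hsh : ℕ) (hk : 1 ≤ k) (hn : 2 ≤ n)
    (hs1 : hsh ≤ 1) (hsk : hsh ≤ k)
    (hak : (a + k + hsh) % 2 = 0)
    (htop : n ≤ a + 3 * (k - 1) + 2)
    (htop2 : a + 3 * (k - 1) ≤ n - 1)
    (hfull : n + hsh ≤ k * k + k + 1) :
    ∃ p : ℕ → ℕ,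
      (∀ j, 1 ≤ j → j ≤ k → p j < n) ∧
      (∀ i j, 1 ≤ i → i < j → j ≤ k → j - i < p i - p j + (p j - p i)) ∧
      (∀ x, x < n → ∃ j, 1 ≤ j ∧ j ≤ k ∧ p j ≤ x + (k + 1 - j) ∧ x ≤ p j + (k + 1 - j)) ∧
      (∀ i, 1 ≤ i → i ≤ k → (p i + i) % 2 = (p 1 + 1) % 2) := by
  have hfval := posf_lastval k hsh a hk hsk
  have hlast_lo : n ≤ posf k hsh a (k - 1) + 2 := by unfold posf; omega
  have hlast_hi : posf k hsh a (k - 1) ≤ n - 1 := by unfold posf; omega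
  have h00 : 0 * (2 * k - 0) = 0 := by omega
  have h0 : posf k hsh a 0 ≤ k := by unfold posf; rw [h00]; omega
  refine ⟨fun j => posf k hsh a (j - 1), ?_, ?_, ?_, ?_⟩
  · intro j h1 h2
    show posf k hsh a (j - 1) < n
    have := posf_mono k hsh a (k - 1) (by omega) (j - 1) (by omega)
    omega
  · intro i j hi hij hjk
    show j - i < posf k hsh a (i - 1) - posf k hsh a (j - 1)
      + (posf k hsh a (j - 1) - posf k hsh a (i - 1))
    have := posf_mono k hsh a (j - 1) (by omega) (i - 1) (by omega)
    omega
  · -- coverage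
    have main : ∀ i, i ≤ k - 1 → ∀ x, x ≤ posf k hsh a i + (k - i) →
        ∃ j, 1 ≤ j ∧ j ≤ i + 1 ∧ posf k hsh a (j - 1) ≤ x + (k + 1 - j) ∧
          x ≤ posf k hsh a (j - 1) + (k + 1 - j) := by
      intro i
      induction i with
      | zero =>
        intro _ x hx
        refine ⟨1, le_refl 1, by omega, ?_, ?_⟩
        · show posf k hsh a 0 ≤ x + (k + 1 - 1); omega
        · show x ≤ posf k hsh a 0 + (k + 1 - 1); omega
      | succ i ih =>
        intro hik x hx
        rcases Nat.lt_or_ge (x + (k - (i + 1))) (posf k hsh a (i + 1)) with hc | hc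
        · have hgap := (posf_gap k hsh a i (by omega)).2
          exact (ih (by omega) x (by omega)).imp (fun j hj => ⟨hj.1, by omega, hj.2.2⟩)
        · refine ⟨i + 2, by omega, by omega, ?_, ?_⟩
          · show posf k hsh a (i + 1) ≤ x + (k + 1 - (i + 2)); omega
          · show x ≤ posf k hsh a (i + 1) + (k + 1 - (i + 2)); omega
    intro x hx
    obtain ⟨j, h1, h2, h3, h4⟩ := main (k - 1) (le_refl _) x (by omega)
    exact ⟨j, h1, by omega, h3, h4⟩
  · intro i h1 h2
    show (posf k hsh a (i - 1) + i) % 2 = (posf k hsh a 0 + 1) % 2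
    have p1 := posf_par k hsh a (i - 1) (by omega) hsk hak
    have p2 := posf_par k hsh a 0 (by omega) hsk hak
    omega

lemma construct (k n : ℕ) (hk : 1 ≤ k) (hlo : 3 * k ≤ n + 2) (hhi : n ≤ k * k + k + 1)
    (hn : 2 ≤ n) :
    ∃ p : ℕ → ℕ,
      (∀ j, 1 ≤ j → j ≤ k → p j < n) ∧
      (∀ i j, 1 ≤ i → i < j → j ≤ k → j - i < p i - p j + (p j - p i)) ∧
      (∀ x, x < n → ∃ j, 1 ≤ j ∧ j ≤ k ∧ p j ≤ x + (k + 1 - j) ∧ x ≤ p j + (k + 1 - j)) ∧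
      (∀ i, 1 ≤ i → i ≤ k → (p i + i) % 2 = (p 1 + 1) % 2) := by
  have hkk := even_kk k
  by_cases hcase : n + 2 = 3 * k
  · refine construct_aux k n 0 (k % 2) hk hn (by omega) (by omega) (by omega)
      (by omega) (by omega) ?_
    have h5 : k = 1 ∨ 2 * k ≤ k * k := by
      rcases Nat.lt_or_ge k 2 with h | h
      · left; omega
      · right; nlinarith
    omega
  · refine construct_aux k n (n + 1 - 3 * k) ((n + 1) % 2) hk hn (by omega) (by omega)
      (by omega) (by omega) (by omega) (by omega)

lemma ceil_lower (n k : ℕ) (hn : 2 ≤ n) (h : n ≤ k * k + k + 1) :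
    ⌈(Real.sqrt (4 * n - 3) - 1) / 2⌉ ≤ (k : ℤ) := by
  rw [Int.ceil_le]
  rw [div_le_iff₀ (by norm_num : (0:ℝ) < 2)]
  have h1 : Real.sqrt (4 * n - 3) ≤ 2 * k + 1 := by
    rw [Real.sqrt_le_iff]
    constructor
    · positivity
    · have : (n : ℝ) ≤ k * k + k + 1 := by exact_mod_cast h
      nlinarith
  push_cast
  linarith

lemma ceil_lower_eq (n k : ℕ) (hn : 2 ≤ n) (h1 : n ≤ k * k + k + 1) (hk : 1 ≤ k)
    (h2 : k * k - k + 1 < n) :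
    (k : ℤ) = ⌈(Real.sqrt (4 * n - 3) - 1) / 2⌉ := by
  have hub := ceil_lower n k hn h1
  have hlb : (k : ℤ) - 1 < ⌈(Real.sqrt (4 * n - 3) - 1) / 2⌉ := by
    rw [Int.lt_ceil]
    rw [lt_div_iff₀ (by norm_num : (0:ℝ) < 2)]
    have h3 : (2 * k - 1 : ℝ) < Real.sqrt (4 * n - 3) := by
      apply Real.lt_sqrt_of_sq_lt
      have hkn : (k * k - k + 1 : ℝ) < n := by
        have h4 : ((k * k - k + 1 : ℕ) : ℝ) < n := by exact_mod_cast h2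
        have hc : (k:ℕ) ≤ k * k := Nat.le_mul_of_pos_left k (by omega)
        push_cast [hc] at h4
        linarith
      nlinarith
    push_cast
    linarith
  omega

lemma ceil_upper (n k : ℕ) (h : 3 * k ≤ n + 2) : (k : ℤ) ≤ ⌈(n : ℝ) / 3⌉ := by
  have hlb : (k : ℤ) - 1 < ⌈(n : ℝ) / 3⌉ := by
    rw [Int.lt_ceil]
    rw [lt_div_iff₀ (by norm_num : (0:ℝ) < 3)]
    have h5 : (3 * k : ℝ) ≤ n + 2 := by exact_mod_cast h
    push_cast
    linarith
  omega

lemma ceil_upper_eq (n k : ℕ) (h : 3 * k ≤ n + 2) (h2 : n ≤ 3 * k) :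
    (k : ℤ) = ⌈(n : ℝ) / 3⌉ := by
  have h1 := ceil_upper n k h
  have h3 : ⌈(n : ℝ) / 3⌉ ≤ (k : ℤ) := by
    rw [Int.ceil_le, div_le_iff₀ (by norm_num : (0:ℝ) < 3)]
    have h6 : (n : ℝ) ≤ 3 * k := by exact_mod_cast h2
    push_cast
    linarith
  omega

end aux

/-- Theorem: for a burning homomorphism of `P_n` (`n ≥ 2`) with burning sequence of length `k`,
`⌈(√(4n-3) - 1)/2⌉ ≤ k ≤ ⌈n/3⌉`, and both bounds are attained for every `n`. -/
theorem stmt15 (n : ℕ) (hn : 2 ≤ n) :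
    (∀ (s : ℕ → Fin n) (k : ℕ), IsBurningHom (SimpleGraph.pathGraph n) s k →
      ⌈(Real.sqrt (4 * n - 3) - 1) / 2⌉ ≤ (k : ℤ) ∧ (k : ℤ) ≤ ⌈(n : ℝ) / 3⌉) ∧
    (∃ (s : ℕ → Fin n) (k : ℕ), IsBurningHom (SimpleGraph.pathGraph n) s k ∧
      (k : ℤ) = ⌈(Real.sqrt (4 * n - 3) - 1) / 2⌉) ∧
    (∃ (s : ℕ → Fin n) (k : ℕ), IsBurningHom (SimpleGraph.pathGraph n) s k ∧
      (k : ℤ) = ⌈(n : ℝ) / 3⌉) := by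
  have hn1 : 1 ≤ n := by omega
  refine ⟨?_, ?_, ?_⟩
  · intro s k hhom
    obtain ⟨hsp, hcv⟩ := bounds_of_hom hn hhom
    exact ⟨ceil_lower n k hn hcv, ceil_upper n k hsp⟩
  · -- lower bound attained
    have hex : ∃ k, n ≤ k * k + k + 1 := ⟨n, by nlinarith⟩
    set k₀ := Nat.find hex with hk₀
    have hQ : n ≤ k₀ * k₀ + k₀ + 1 := Nat.find_spec hex
    have hk1 : 1 ≤ k₀ := by
      rcases Nat.eq_zero_or_pos k₀ with h | h
      · rw [h] at hQ; omega
      · exact h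
    have hmin : ¬ n ≤ (k₀ - 1) * (k₀ - 1) + (k₀ - 1) + 1 := Nat.find_min hex (by omega)
    obtain ⟨m, hm⟩ : ∃ m, k₀ = m + 1 := ⟨k₀ - 1, by omega⟩
    have hsq : (m + 1) * (m + 1) = m * m + 2 * m + 1 := by ring
    have h2 : k₀ * k₀ - k₀ + 1 < n := by
      rw [hm] at hmin ⊢
      simp only [Nat.add_sub_cancel] at hmin
      omega
    have hlo : 3 * k₀ ≤ n + 2 := by
      have h4 : 4 * k₀ ≤ k₀ * k₀ + 4 := by zify; nlinarith [sq_nonneg ((k₀:ℤ) - 2)]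
      rw [hm] at h2 ⊢
      rw [hm] at h4
      omega
    obtain ⟨p, hlt, hA, hB, hP⟩ := construct k₀ n hk1 hlo hQ hn
    obtain ⟨s, hs⟩ := build_hom hn hk1 p hlt hA hB hP
    exact ⟨s, k₀, hs, ceil_lower_eq n k₀ hn hQ hk1 h2⟩
  · -- upper bound attained
    set k₁ := (n + 2) / 3 with hk₁
    have hk1 : 1 ≤ k₁ := by omega
    have hlo : 3 * k₁ ≤ n + 2 := by omega
    have hup : n ≤ 3 * k₁ := by omega
    have hhi : n ≤ k₁ * k₁ + k₁ + 1 := by nlinarith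
    obtain ⟨p, hlt, hA, hB, hP⟩ := construct k₁ n hk1 hlo hhi hn
    obtain ⟨s, hs⟩ := build_hom hn hk1 p hlt hA hB hP
    exact ⟨s, k₁, hs, ceil_upper_eq n k₁ hlo hup⟩
end

section
/- Let P_n (n >= 2) be a path graph and let S_P be a burning sequence defining a burning homomorphism of P_n with end time T. Then ceil((sqrt(4n - 3) - 1)/2) + 1 <= T <= ceil(n/3) + 1, and both bounds are attained. -/
open SimpleGraph

/-!
On `P_n` the burning map of sources `v_1, …, v_m` is `λ(w) = min_k (k + |w - v_k|)`; the sources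
satisfy `|v_j - v_k| > j - k` for `k < j`, and every vertex has `λ ≤ m + 1`. If `λ` is a
homomorphism, `λ(w) + w` has constant parity; as `λ(v_k) = k`, this gives
`|v_j - v_k| ≡ j - k (mod 2)`, so distinct sources are at least 3 apart, whence `m ≤ ⌈n/3⌉`, and a
neighbour of `v_m` burns at time `m + 1`, so `T = m + 1`. The vertices with `λ ≡ m (mod 2)` form a
vertex cover of the path, so there are at least `(n - 1)/2` of them; each has `λ ≤ m`, so lies
within `m - k` of some `v_k` at a distance `≡ m - k (mod 2)`, and there are at most `m - k + 1`
such vertices per source. Hence `n ≤ m² + m + 1`, which is the lower bound. Sources spaced 3 apart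
attain the upper bound, and sources at the squares attain the lower one.
-/

open Finset

theorem mul_self_mod_two (r : ℕ) : r * r % 2 = r % 2 := by
  rcases Nat.mod_two_eq_zero_or_one r with h | h <;> simp [Nat.mul_mod, h]

theorem sub_one_mul_sub_one_add_two_mul {m : ℕ} (hm : 1 ≤ m) :
    (m - 1) * (m - 1) + 2 * m = m * m + 1 := by
  obtain ⟨m, rfl⟩ := Nat.exists_eq_add_of_le' hm
  rw [Nat.add_sub_cancel]
  ring

theorem mul_self_add_sub_le {a b : ℕ} (h : a ≤ b) : a * a + (b - a) ≤ b * b := by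
  obtain ⟨d, rfl⟩ := Nat.exists_eq_add_of_le h
  rw [Nat.add_sub_cancel_left]
  nlinarith [Nat.le_mul_self d]

theorem mul_self_add_sub_lt {a b : ℕ} (ha : 1 ≤ a) (h : a < b) : a * a + (b - a) < b * b := by
  obtain ⟨d, rfl⟩ := Nat.exists_eq_add_of_lt h
  rw [show a + d + 1 - a = d + 1 by omega]
  nlinarith

theorem exists_near_mul_self {N M : ℕ} (hM : 1 ≤ M) (hN : N ≤ M * M + M) :
    ∃ r, 1 ≤ r ∧ r ≤ M ∧ r * r ≤ N + r ∧ N ≤ r * r + r := by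
  induction M, hM using Nat.le_induction with
  | base => exact ⟨1, le_rfl, le_rfl, by omega, by omega⟩
  | succ M hM ih =>
    by_cases h : N ≤ M * M + M
    · obtain ⟨r, h1, h2, h3, h4⟩ := ih h
      exact ⟨r, h1, by omega, h3, h4⟩
    · have : (M + 1) * (M + 1) = M * M + M + M + 1 := by ring
      exact ⟨M + 1, by omega, le_rfl, by omega, by omega⟩

theorem two_mul_sum_Icc_sub_add_one (m : ℕ) : 2 * ∑ k ∈ Icc 1 m, (m - k + 1) = m * (m + 1) := by
  have h : ∑ k ∈ Icc 1 m, (m - k + 1) = ∑ i ∈ range (m + 1), i := by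
    rw [range_eq_Ico, sum_eq_sum_Ico_succ_bot (by omega), zero_add]
    refine sum_nbij' (fun k => m + 1 - k) (fun i => m + 1 - i) ?_ ?_ ?_ ?_ ?_ <;>
      intro a <;> simp <;> omega
  rw [h, mul_comm, sum_range_id_mul_two, Nat.add_sub_cancel, mul_comm]

theorem card_filter_natAbs_sub_le_of_even {n : ℕ} (c r : ℕ) :
    #(univ.filter fun w : Fin n => ((w : ℤ) - c).natAbs ≤ r ∧ (((w : ℤ) - c).natAbs + r) % 2 = 0)
      ≤ r + 1 := by
  refine (card_le_card_of_injOn (t := range (r + 1)) (fun w => (w.val + r - c) / 2) ?_ ?_).trans_eq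
    (card_range _)
  · intro w hw
    obtain ⟨-, hw⟩ := mem_filter.1 hw
    simp only [mem_coe, mem_range]
    omega
  · intro v hv w hw hvw
    obtain ⟨-, hv⟩ := mem_filter.1 hv
    obtain ⟨-, hw⟩ := mem_filter.1 hw
    exact Fin.ext (by simp only at hvw; omega)

theorem three_mul_le_of_three_le_natAbs_sub {n m : ℕ} {f : ℕ → ℕ}
    (hf : ∀ k, 1 ≤ k → k ≤ m → f k < n)
    (hsep : ∀ k j, 1 ≤ k → k < j → j ≤ m → 3 ≤ ((f j : ℤ) - f k).natAbs) : 3 * m ≤ n + 2 := by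
  have := card_le_card_of_injOn (s := Icc 1 m) (t := range ((n + 2) / 3)) (fun k => f k / 3)
    (fun k hk => by
      simp only [coe_Icc, Set.mem_Icc] at hk
      have := hf k hk.1 hk.2
      simp only [coe_range, Set.mem_Iio]
      omega)
    (fun k hk j hj hkj => by
      simp only [coe_Icc, Set.mem_Icc] at hk hj
      simp only at hkj
      by_contra hne
      rcases Nat.lt_or_gt_of_ne hne with h | h
      · have := hsep k j hk.1 h hj.2
        omega
      · have := hsep j k hj.1 h hk.2
        omega)
  simp only [Nat.card_Icc, card_range] at this
  omega

theorem ceil_natCast_div_three (n : ℕ) : ⌈(n : ℝ) / 3⌉ = ((n + 2) / 3 : ℕ) := by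
  have h : (n : ℝ) / 3 = ((n / 3 : ℚ) : ℝ) := by push_cast; rfl
  rw [h, Rat.ceil_cast, show ((3 : ℚ)) = ((3 : ℕ) : ℚ) by norm_num, Rat.ceil_natCast_div_natCast]
  omega

theorem ceil_sqrt_le_iff (n m : ℕ) :
    ⌈(Real.sqrt (4 * n - 3) - 1) / 2⌉ ≤ (m : ℤ) ↔ n ≤ m * m + m + 1 := by
  rw [Int.ceil_le, div_le_iff₀ two_pos, sub_le_iff_le_add, Real.sqrt_le_left (by positivity),
    ← Nat.cast_le (α := ℝ)]
  push_cast
  constructor <;> intro h <;> nlinarith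

namespace SimpleGraph

variable {n : ℕ}

theorem pathGraph_exists_walk_length (d : ℕ) {u v : Fin n} (h : u.val + d = v.val) :
    ∃ p : (pathGraph n).Walk u v, p.length = d := by
  induction d generalizing u with
  | zero =>
    obtain rfl : u = v := Fin.ext (by omega)
    exact ⟨.nil, rfl⟩
  | succ d ih =>
    have hu : u.val + 1 < n := by omega
    obtain ⟨p, hp⟩ := ih (u := ⟨u.val + 1, hu⟩) (by simp only; omega)
    exact ⟨Walk.cons (pathGraph_adj.2 (Or.inl rfl)) p, by simp [hp]⟩

theorem pathGraph_natAbs_sub_le_walk_length {u v : Fin n} (p : (pathGraph n).Walk u v) :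
    ((v : ℤ) - u).natAbs ≤ p.length := by
  induction p with
  | nil => simp
  | cons h _ ih =>
    rw [pathGraph_adj] at h
    rw [Walk.length_cons]
    omega

theorem dist_pathGraph (u v : Fin n) : (pathGraph n).dist u v = ((v : ℤ) - u).natAbs := by
  refine le_antisymm ?_ ?_
  · rcases le_total u.val v.val with h | h
    · obtain ⟨p, hp⟩ := pathGraph_exists_walk_length (v.val - u.val) (u := u) (v := v) (by omega)
      exact (dist_le p).trans (by omega)
    · obtain ⟨p, hp⟩ := pathGraph_exists_walk_length (u.val - v.val) (u := v) (v := u) (by omega)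
      exact (dist_le p.reverse).trans (by rw [Walk.length_reverse]; omega)
  · obtain ⟨p, hp⟩ := (pathGraph_preconnected n u v).exists_walk_length_eq_dist
    exact hp ▸ pathGraph_natAbs_sub_le_walk_length p

theorem pathGraph_exists_adj (hn : 2 ≤ n) (v : Fin n) : ∃ w, (pathGraph n).Adj v w := by
  by_cases hv : v.val + 1 < n
  · exact ⟨⟨v.val + 1, hv⟩, pathGraph_adj.2 (Or.inl rfl)⟩
  · exact ⟨⟨v.val - 1, by omega⟩, pathGraph_adj.2 (Or.inr (by simp only; omega))⟩

theorem IsVertexCover.le_two_mul_card_add_one_pathGraph {c : Finset (Fin n)}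
    (hc : (pathGraph n).IsVertexCover c) : n ≤ 2 * #c + 1 := by
  let next (i : Fin n) : Fin n := if h : i.val + 1 < n then ⟨i.val + 1, h⟩ else i
  have hcompl : #cᶜ ≤ #(c ∪ univ.filter (fun i : Fin n => i.val + 1 = n)) := by
    refine card_le_card_of_injOn next (fun i hi => ?_) (fun i hi j hj hij => ?_)
    · simp only [coe_compl, Set.mem_compl_iff, mem_coe] at hi
      by_cases h : i.val + 1 < n
      · have hadj : (pathGraph n).Adj i ⟨i.val + 1, h⟩ := pathGraph_adj.2 (Or.inl rfl)
        simpa [next, h, hi] using Or.inl (hc hadj)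
      · simp [next, h]
        omega
    · simp only [coe_compl, Set.mem_compl_iff, mem_coe] at hi hj
      simp only [next] at hij
      split_ifs at hij with hi' hj' hj' <;> rw [Fin.ext_iff] at hij ⊢
      · simpa using hij
      · simpa [hi, hj] using hc (pathGraph_adj.2 (Or.inl hij))
      · simpa [hi, hj] using hc (pathGraph_adj.2 (Or.inr hij.symm))
      · exact hij
  have hlast : #(univ.filter (fun i : Fin n => i.val + 1 = n)) ≤ 1 :=
    card_le_one.2 fun i hi j hj => by simp at hi hj; omega
  have := card_union_le c (univ.filter (fun i : Fin n => i.val + 1 = n))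
  have := card_add_card_compl c
  simp only [Fintype.card_fin] at this
  omega

end SimpleGraph

section PathBurning

variable {n m : ℕ} {s : ℕ → Fin n}

theorem mem_burnN_pathGraph {j : ℕ} {w : Fin n} :
    w ∈ burnN (pathGraph n) s m j ↔ ∃ k, 1 ≤ k ∧ k ≤ m ∧ k + ((w : ℤ) - s k).natAbs ≤ j := by
  simp only [burnN, Set.mem_ofPred_eq, dist_pathGraph, pathGraph_preconnected n _ _, true_and]
  exact ⟨fun ⟨k, h1, h2, _, h3⟩ => ⟨k, h1, h2, by omega⟩,
    fun ⟨k, h1, h2, h3⟩ => ⟨k, h1, h2, by omega, by omega⟩⟩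

theorem mem_burnU_pathGraph {j : ℕ} {w : Fin n} :
    w ∈ burnU (pathGraph n) s m j ↔
      ∃ k, 1 ≤ k ∧ k ≤ m ∧ k < j ∧ k + ((w : ℤ) - s k).natAbs ≤ j := by
  simp only [burnU, Set.mem_ofPred_eq, dist_pathGraph, pathGraph_preconnected n _ _, true_and]
  exact ⟨fun ⟨k, h1, h2, h3, h4⟩ => ⟨k, h1, h2, h3, by omega⟩,
    fun ⟨k, h1, h2, h3, h4⟩ => ⟨k, h1, h2, h3, by omega⟩⟩

theorem burnTime_pathGraph_le {k : ℕ} (hk : 1 ≤ k) (hkm : k ≤ m) (w : Fin n) :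
    burnTime (pathGraph n) s m w ≤ k + ((w : ℤ) - s k).natAbs :=
  Nat.sInf_le (mem_burnN_pathGraph.2 ⟨k, hk, hkm, le_rfl⟩)

theorem exists_burnTime_pathGraph_eq (hm : 1 ≤ m) (w : Fin n) :
    ∃ k, 1 ≤ k ∧ k ≤ m ∧ burnTime (pathGraph n) s m w = k + ((w : ℤ) - s k).natAbs := by
  have hne : {j | w ∈ burnN (pathGraph n) s m j}.Nonempty :=
    ⟨_, mem_burnN_pathGraph.2 ⟨1, le_rfl, hm, le_rfl⟩⟩
  obtain ⟨k, hk, hkm, hle⟩ := mem_burnN_pathGraph.1 (Nat.sInf_mem hne)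
  exact ⟨k, hk, hkm, le_antisymm (burnTime_pathGraph_le hk hkm w) hle⟩

namespace IsBurningSeq

theorem lt_natAbs_sub (hs : IsBurningSeq (pathGraph n) s m) {k j : ℕ} (hk : 1 ≤ k) (hkj : k < j)
    (hj : j ≤ m) : j - k < ((s j : ℤ) - s k).natAbs := by
  by_contra h
  exact hs.2.1 j (by omega) hj (mem_burnU_pathGraph.2 ⟨k, hk, by omega, hkj, by omega⟩)

theorem exists_add_natAbs_sub_le (hs : IsBurningSeq (pathGraph n) s m) (w : Fin n) :
    ∃ k, 1 ≤ k ∧ k ≤ m ∧ k + ((w : ℤ) - s k).natAbs ≤ m + 1 := by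
  obtain ⟨k, hk, hkm, -, hle⟩ := mem_burnU_pathGraph.1 (hs.2.2 w)
  exact ⟨k, hk, hkm, hle⟩

theorem burnTime_le (hs : IsBurningSeq (pathGraph n) s m) (w : Fin n) :
    burnTime (pathGraph n) s m w ≤ m + 1 := by
  obtain ⟨k, hk, hkm, hle⟩ := hs.exists_add_natAbs_sub_le w
  exact (burnTime_pathGraph_le hk hkm w).trans hle

theorem burnTime_source (hs : IsBurningSeq (pathGraph n) s m) {k : ℕ} (hk : 1 ≤ k)
    (hkm : k ≤ m) : burnTime (pathGraph n) s m (s k) = k := by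
  have hle := burnTime_pathGraph_le (s := s) hk hkm (s k)
  obtain ⟨i, hi, him, heq⟩ := exists_burnTime_pathGraph_eq (s := s) (hk.trans hkm) (s k)
  rcases lt_trichotomy i k with h | rfl | h
  · have := hs.lt_natAbs_sub hi h hkm
    omega
  · simp_all
  · have := hs.lt_natAbs_sub hk h him
    omega

theorem le_burnTime_of_natAbs_sub_le_one (hs : IsBurningSeq (pathGraph n) s m) {w : Fin n}
    (hw : ((w : ℤ) - s m).natAbs ≤ 1) : m ≤ burnTime (pathGraph n) s m w := by
  obtain ⟨k, hk, hkm, heq⟩ := exists_burnTime_pathGraph_eq (s := s) hs.1 w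
  rcases hkm.lt_or_eq with h | rfl
  · have := hs.lt_natAbs_sub hk h le_rfl
    omega
  · omega

end IsBurningSeq

namespace IsBurningHom

theorem burnTime_add_mod_two (hh : IsBurningHom (pathGraph n) s m) (v w : Fin n) :
    (burnTime (pathGraph n) s m v + v) % 2 = (burnTime (pathGraph n) s m w + w) % 2 := by
  suffices h : ∀ (i : ℕ) (hi : i < n),
      (burnTime (pathGraph n) s m ⟨i, hi⟩ + i) % 2 = (burnTime (pathGraph n) s m ⟨0, by omega⟩) % 2 by
    rw [h v v.isLt, h w w.isLt]
  intro i
  induction i with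
  | zero => simp
  | succ i ih =>
    intro hi
    have := hh.2 _ _ (pathGraph_adj.2 (Or.inl rfl) : (pathGraph n).Adj ⟨i, by omega⟩ ⟨i + 1, hi⟩)
    have := ih (by omega)
    omega

theorem add_mod_two_eq (hh : IsBurningHom (pathGraph n) s m) {k j : ℕ} (hk : 1 ≤ k) (hkm : k ≤ m)
    (hj : 1 ≤ j) (hjm : j ≤ m) : (k + s k) % 2 = (j + s j) % 2 := by
  simpa [hh.1.burnTime_source hk hkm, hh.1.burnTime_source hj hjm] using
    hh.burnTime_add_mod_two (s k) (s j)

theorem three_le_natAbs_sub (hh : IsBurningHom (pathGraph n) s m) {k j : ℕ} (hk : 1 ≤ k)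
    (hkj : k < j) (hj : j ≤ m) : 3 ≤ ((s j : ℤ) - s k).natAbs := by
  have := hh.1.lt_natAbs_sub hk hkj hj
  have := hh.add_mod_two_eq hk (hkj.le.trans hj) (by omega) hj
  omega

theorem endTime_eq (hh : IsBurningHom (pathGraph n) s m) (hn : 2 ≤ n) :
    endTime (pathGraph n) s m = m + 1 := by
  obtain ⟨w, hadj⟩ := pathGraph_exists_adj hn (s m)
  have hlast := hh.1.burnTime_source hh.1.1 le_rfl
  have hstep := hh.2 _ _ hadj
  have hw := hh.1.le_burnTime_of_natAbs_sub_le_one (w := w)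
    (by rw [pathGraph_adj] at hadj; omega)
  refine le_antisymm (Finset.sup_le fun v _ => hh.1.burnTime_le v) ?_
  calc m + 1 = burnTime (pathGraph n) s m w := by omega
    _ ≤ endTime (pathGraph n) s m := Finset.le_sup (mem_univ w)

theorem three_mul_le (hh : IsBurningHom (pathGraph n) s m) : 3 * m ≤ n + 2 :=
  three_mul_le_of_three_le_natAbs_sub (fun k _ _ => (s k).isLt)
    fun _ _ hk hkj hj => hh.three_le_natAbs_sub hk hkj hj

theorem le_mul_self_add_add_one (hh : IsBurningHom (pathGraph n) s m) : n ≤ m * m + m + 1 := by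
  set A := univ.filter fun w => burnTime (pathGraph n) s m w % 2 = m % 2
  set ball := fun k => univ.filter fun w : Fin n =>
    ((w : ℤ) - s k).natAbs ≤ m - k ∧ (((w : ℤ) - s k).natAbs + (m - k)) % 2 = 0
  have hcover : (pathGraph n).IsVertexCover A := fun v w hadj => by
    have := hh.2 v w hadj
    simp only [A, mem_coe, mem_filter, mem_univ, true_and]
    omega
  have hsub : A ⊆ (Icc 1 m).biUnion ball := fun w hw => by
    simp only [A, mem_filter, mem_univ, true_and] at hw
    obtain ⟨k, hk, hkm, heq⟩ := exists_burnTime_pathGraph_eq (s := s) hh.1.1 w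
    have := hh.1.burnTime_le w
    simp only [ball, mem_biUnion, mem_Icc, mem_filter, mem_univ, true_and]
    exact ⟨k, ⟨hk, hkm⟩, by omega, by omega⟩
  have hcard : #A ≤ ∑ k ∈ Icc 1 m, (m - k + 1) :=
    (card_le_card hsub).trans <| card_biUnion_le.trans <|
      sum_le_sum fun k _ => card_filter_natAbs_sub_le_of_even _ _
  have := hcover.le_two_mul_card_add_one_pathGraph
  have := two_mul_sum_Icc_sub_add_one m
  linarith

end IsBurningHom

end PathBurning

section PathConstructions

variable {n m : ℕ}

theorem isBurningHom_pathGraph_of {s : ℕ → Fin n} (hm : 1 ≤ m)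
    (hsep : ∀ k j, 1 ≤ k → k < j → j ≤ m → j - k < ((s j : ℤ) - s k).natAbs)
    (hcov : ∀ w : Fin n, ∃ k, 1 ≤ k ∧ k ≤ m ∧ k + ((w : ℤ) - s k).natAbs ≤ m + 1)
    (hpar : ∀ k, 1 ≤ k → k ≤ m → (k + s k) % 2 = (1 + s 1) % 2) :
    IsBurningHom (pathGraph n) s m := by
  refine ⟨⟨hm, fun j hj hjm hmem => ?_, fun w => ?_⟩, fun v w hadj => ?_⟩
  · obtain ⟨k, hk, -, hkj, hle⟩ := mem_burnU_pathGraph.1 hmem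
    have := hsep k j hk hkj hjm
    omega
  · obtain ⟨k, hk, hkm, hle⟩ := hcov w
    exact mem_burnU_pathGraph.2 ⟨k, hk, hkm, by omega, hle⟩
  · obtain ⟨kv, hkv, hkvm, hv⟩ := exists_burnTime_pathGraph_eq (s := s) hm v
    obtain ⟨kw, hkw, hkwm, hw⟩ := exists_burnTime_pathGraph_eq (s := s) hm w
    have := burnTime_pathGraph_le (s := s) hkw hkwm v
    have := burnTime_pathGraph_le (s := s) hkv hkvm w
    have := hpar kv hkv hkvm
    have := hpar kw hkw hkwm
    rw [pathGraph_adj] at hadj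
    omega

theorem exists_isBurningHom_pathGraph {f : ℕ → ℕ} (hm : 1 ≤ m)
    (hf : ∀ k, 1 ≤ k → k ≤ m → f k < n)
    (hsep : ∀ k j, 1 ≤ k → k < j → j ≤ m → j - k < ((f j : ℤ) - f k).natAbs)
    (hcov : ∀ w < n, ∃ k, 1 ≤ k ∧ k ≤ m ∧ k + ((w : ℤ) - f k).natAbs ≤ m + 1)
    (hpar : ∀ k, 1 ≤ k → k ≤ m → (k + f k) % 2 = (1 + f 1) % 2) :
    ∃ s : ℕ → Fin n, IsBurningHom (pathGraph n) s m := by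
  have hn := hf 1 le_rfl hm
  let s (k : ℕ) : Fin n := ⟨min (f k) (n - 1), by omega⟩
  have hs : ∀ k, 1 ≤ k → k ≤ m → (s k : ℕ) = f k := fun k hk hkm => by
    have := hf k hk hkm
    simp only [s]
    omega
  refine ⟨s, isBurningHom_pathGraph_of hm (fun k j hk hkj hjm => ?_) (fun w => ?_)
    (fun k hk hkm => ?_)⟩
  · rw [hs k hk (by omega), hs j (by omega) hjm]
    exact hsep k j hk hkj hjm
  · obtain ⟨k, hk, hkm, hle⟩ := hcov w w.isLt
    exact ⟨k, hk, hkm, by rwa [hs k hk hkm]⟩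
  · rw [hs k hk hkm, hs 1 le_rfl hm]
    exact hpar k hk hkm

theorem exists_isBurningHom_pathGraph_div_three (hn : 1 ≤ n) :
    ∃ s : ℕ → Fin n, IsBurningHom (pathGraph n) s ((n + 2) / 3) := by
  set a := if 3 ∣ n then 1 else 0 with ha
  refine exists_isBurningHom_pathGraph (f := fun k => 3 * (k - 1) + a) (by omega)
    (fun k _ _ => ?_) (fun k j _ _ _ => ?_) (fun w hw => ⟨w / 3 + 1, by omega, ?_, ?_⟩)
    (fun k _ _ => by omega) <;> split_ifs at ha <;> omega

/- The `k`-th source, `k ≥ 2`, sits at `r * r - t` with `r = m + 1 - k`. Its ball of radius `r` is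
`[r * r - r - t, r * r + r - t]`, so these balls cover `[0, m * m - m - t]`, consecutive ones
sharing an endpoint; the first source, at `p`, covers the rest of the path. -/
theorem exists_isBurningHom_pathGraph_squares {t p : ℕ} (hm : 1 ≤ m) (ht : t ≤ 1) (hp : p < n)
    (hpm : p + t ≤ m * m) (hnp : n ≤ p + m + 1) (hsep : 2 ≤ m → (m - 1) * (m - 1) + 2 ≤ p + t)
    (hpar : (p + t + m) % 2 = 0) :
    ∃ s : ℕ → Fin n, IsBurningHom (pathGraph n) s m := by
  have hpred := sub_one_mul_sub_one_add_two_mul hm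
  refine exists_isBurningHom_pathGraph
    (f := fun k => if k = 1 then p else (m + 1 - k) * (m + 1 - k) - t) hm
    (fun k hk hkm => ?_) (fun k j hk hkj hjm => ?_) (fun w hw => ?_) (fun k hk hkm => ?_)
  · split_ifs
    · exact hp
    · have := mul_self_add_sub_le (show m + 1 - k ≤ m - 1 by omega)
      have := hsep (by omega)
      omega
  · simp only [show j ≠ 1 by omega, if_false]
    set r := m + 1 - j with hr
    split_ifs
    · have := mul_self_add_sub_le (show r ≤ m - 1 by omega)
      have := hsep (by omega)
      have := Nat.le_mul_self r
      omega
    · have := mul_self_add_sub_lt (show 1 ≤ r by omega) (show r < m + 1 - k by omega)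
      have := Nat.le_mul_self r
      omega
  · by_cases hw' : 2 ≤ m ∧ w + t ≤ (m - 1) * (m - 1) + (m - 1)
    · obtain ⟨r, hr1, hrm, hr2, hr3⟩ := exists_near_mul_self (M := m - 1) (by omega) hw'.2
      refine ⟨m + 1 - r, by omega, by omega, ?_⟩
      simp only [show m + 1 - r ≠ 1 by omega, if_false, show m + 1 - (m + 1 - r) = r by omega]
      omega
    · have : m * m ≤ w + t + m := by
        rcases Nat.lt_or_ge m 2 with h | h
        · obtain rfl : m = 1 := by omega
          omega
        · omega
      refine ⟨1, le_rfl, hm, ?_⟩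
      simp only [if_true]
      omega
  · by_cases hk1 : k = 1
    · simp [hk1]
    · simp only [hk1, if_false, if_true]
      set r := m + 1 - k with hr
      have := mul_self_mod_two r
      have := Nat.le_mul_self r
      omega

theorem exists_isBurningHom_pathGraph_of_lt_of_le
    (hlo : (m - 1) * (m - 1) + (m - 1) + 1 < n) (hup : n ≤ m * m + m + 1) :
    ∃ s : ℕ → Fin n, IsBurningHom (pathGraph n) s m := by
  have hm : 1 ≤ m := by
    rcases Nat.eq_zero_or_pos m with rfl | hm
    · simp at hlo hup
      omega
    · exact hm
  have hpred := sub_one_mul_sub_one_add_two_mul hm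
  -- `t = 1` shifts the squares one step to the left when `m * m` is not a vertex.
  by_cases hsq : n ≤ m * m
  · exact exists_isBurningHom_pathGraph_squares (t := 1) (p := n - 1 - (n + m) % 2) hm le_rfl
      (by omega) (by omega) (by omega) (fun _ => by omega) (by omega)
  · have := mul_self_mod_two m
    exact exists_isBurningHom_pathGraph_squares (t := 0) (p := m * m) hm (Nat.zero_le _)
      (by omega) (by omega) (by omega) (fun _ => by omega) (by omega)

end PathConstructions

/-- Corollary: for a burning homomorphism of `P_n` (`n ≥ 2`) with end time `T`,
`⌈(√(4n-3) - 1)/2⌉ + 1 ≤ T ≤ ⌈n/3⌉ + 1`, and both bounds are attained. -/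
theorem stmt16 (n : ℕ) (hn : 2 ≤ n) :
    (∀ (s : ℕ → Fin n) (k : ℕ), IsBurningHom (SimpleGraph.pathGraph n) s k →
      ⌈(Real.sqrt (4 * n - 3) - 1) / 2⌉ + 1 ≤ (endTime (SimpleGraph.pathGraph n) s k : ℤ) ∧
        (endTime (SimpleGraph.pathGraph n) s k : ℤ) ≤ ⌈(n : ℝ) / 3⌉ + 1) ∧
    (∃ (s : ℕ → Fin n) (k : ℕ), IsBurningHom (SimpleGraph.pathGraph n) s k ∧
      (endTime (SimpleGraph.pathGraph n) s k : ℤ) = ⌈(Real.sqrt (4 * n - 3) - 1) / 2⌉ + 1) ∧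
    (∃ (s : ℕ → Fin n) (k : ℕ), IsBurningHom (SimpleGraph.pathGraph n) s k ∧
      (endTime (SimpleGraph.pathGraph n) s k : ℤ) = ⌈(n : ℝ) / 3⌉ + 1) := by
  rw [ceil_natCast_div_three]
  refine ⟨fun s k hh => ?_, ?_, ?_⟩
  · have hlow := (ceil_sqrt_le_iff n k).2 hh.le_mul_self_add_add_one
    have hupp := hh.three_mul_le
    rw [hh.endTime_eq hn]
    omega
  · have hpos := mt (ceil_sqrt_le_iff n 0).1 (by omega)
    obtain ⟨m, hm⟩ : ∃ m : ℕ, ⌈(Real.sqrt (4 * n - 3) - 1) / 2⌉ = m :=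
      Int.eq_ofNat_of_zero_le (by push_cast at hpos; omega)
    have hup := (ceil_sqrt_le_iff n m).1 hm.le
    have hlo : ¬ n ≤ (m - 1) * (m - 1) + (m - 1) + 1 := fun h => by
      have := (ceil_sqrt_le_iff n (m - 1)).2 h
      omega
    obtain ⟨s, hs⟩ := exists_isBurningHom_pathGraph_of_lt_of_le (not_le.1 hlo) hup
    exact ⟨s, m, hs, by rw [hs.endTime_eq hn, hm]; push_cast; rfl⟩
  · obtain ⟨s, hs⟩ := exists_isBurningHom_pathGraph_div_three (n := n) (by omega)
    exact ⟨s, (n + 2) / 3, hs, by rw [hs.endTime_eq hn]; push_cast; rfl⟩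
end

section
/- Let Y_m be the spider tree with m = n^2 - 1 vertices (n > 1) consisting of a center vertex 1 joined to n legs: n-1 legs which are paths of length n and one leg which is a path of length n-1 (for n = 4 this is the tree Y_15). Then every burning sequence of Y_m of length n-1 has first vertex equal to the center vertex 1. -/
open SimpleGraph

/-- The spider tree `Y_m`, `m = n² - 1`: paths `Q_{i+1}` on the paper's vertices
`{ni+1, …, ni+n}` (`0 ≤ i ≤ n-2`), the path `Q_n` on `{n²-n+1, …, n²-1}`, together with the
edges `{1, ni+1}` for `1 ≤ i ≤ n-1`. Here the paper's vertex `x` is `Fin`-vertex `x - 1`. -/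
def spider (n : ℕ) : SimpleGraph (Fin (n ^ 2 - 1)) :=
  SimpleGraph.fromRel (fun v w =>
    ((w : ℕ) = (v : ℕ) + 1 ∧ ¬ n ∣ ((v : ℕ) + 1)) ∨
    ((v : ℕ) = 0 ∧ ∃ i, 1 ≤ i ∧ i ≤ n - 1 ∧ (w : ℕ) = n * i))

/-! ### Auxiliary material -/

/-- Signed depth potential: positive on block `c`, negative elsewhere. -/
def sphi (n c v : ℕ) : ℤ :=
  (if v / n = c then 1 else -1) * (if v < n then (v : ℤ) else (v % n + 1 : ℕ))

lemma sphi_zero (n c : ℕ) (hn : 1 < n) : sphi n c 0 = 0 := by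
  have h0 : (0:ℕ) < n := by omega
  simp [sphi, h0]

lemma sphi_nonneg_block (n c v : ℕ) (hv : v ≠ 0) (h : 0 ≤ sphi n c v) : v / n = c := by
  by_contra hc
  unfold sphi at h
  rw [if_neg hc] at h
  have h1 : (1:ℤ) ≤ (if v < n then (v:ℤ) else (v % n + 1 : ℕ)) := by
    split
    · exact_mod_cast Nat.one_le_iff_ne_zero.mpr hv
    · push_cast; omega
  linarith

lemma succ_mod_div (n a : ℕ) (hn : 1 < n) (h : ¬ n ∣ (a + 1)) :
    (a + 1) % n = a % n + 1 ∧ (a + 1) / n = a / n := by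
  have h0 : 0 < n := by omega
  obtain ⟨q, r, hr, rfl⟩ : ∃ q r, r < n ∧ a = n * q + r :=
    ⟨a / n, a % n, Nat.mod_lt _ h0, (Nat.div_add_mod a n).symm⟩
  have hr1 : r + 1 < n := by
    rcases Nat.lt_or_ge (r+1) n with h'|h'
    · exact h'
    · exfalso; apply h
      have : r + 1 = n := by omega
      exact ⟨q + 1, by rw [Nat.add_assoc, this]; ring⟩
  have e1 : n * q + r + 1 = n * q + (r + 1) := by omega
  constructor
  · rw [e1, Nat.mul_add_mod, Nat.mul_add_mod, Nat.mod_eq_of_lt hr1, Nat.mod_eq_of_lt hr]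
  · rw [e1, Nat.mul_add_div h0, Nat.mul_add_div h0,
      Nat.div_eq_of_lt hr1, Nat.div_eq_of_lt hr]

lemma sphi_lip (n c : ℕ) (hn : 1 < n) {a b : Fin (n ^ 2 - 1)}
    (hab : (spider n).Adj a b) : |sphi n c a - sphi n c b| ≤ 1 := by
  have key : ∀ x y : ℕ, ((y = x + 1 ∧ ¬ n ∣ (x + 1)) ∨
      (x = 0 ∧ ∃ i, 1 ≤ i ∧ i ≤ n - 1 ∧ y = n * i)) →
      |sphi n c x - sphi n c y| ≤ 1 := by
    rintro x y (⟨rfl, hdvd⟩ | ⟨rfl, i, hi1, hi2, rfl⟩)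
    · rcases Nat.eq_zero_or_pos x with rfl | hx
      · rw [sphi_zero n c hn]
        have h1 : (1 : ℕ) < n := hn
        have : sphi n c 1 = (if 1 / n = c then 1 else -1) * 1 := by
          simp [sphi, h1]
        rw [this]
        split <;> simp
      · obtain ⟨hm, hd⟩ := succ_mod_div n x hn hdvd
        rcases Nat.lt_or_ge x n with hxn | hxn
        · have hx1 : x + 1 < n := by
            rcases Nat.lt_or_ge (x+1) n with h'|h'
            · exact h'
            · exact absurd ⟨1, by omega⟩ hdvd
          have hq : x / n = 0 := Nat.div_eq_of_lt hxn
          have hq1 : (x+1) / n = 0 := Nat.div_eq_of_lt hx1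
          simp only [sphi, hq, hq1, if_pos hxn, if_pos hx1]
          split <;> (push_cast; rw [abs_le]; omega)
        · have hxn1 : ¬ (x < n) := by omega
          have hxn2 : ¬ (x + 1 < n) := by omega
          simp only [sphi, hd, if_neg hxn1, if_neg hxn2, hm]
          split <;> (push_cast; rw [abs_le]; omega)
    · rw [sphi_zero n c hn]
      have hni : ¬ (n * i < n) := by nlinarith
      have hmod : (n * i) % n = 0 := Nat.mul_mod_right n i
      have : sphi n c (n * i) = (if (n*i) / n = c then 1 else -1) * 1 := by
        simp [sphi, hni, hmod]
      rw [this]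
      split <;> simp
  simp only [spider, SimpleGraph.fromRel_adj] at hab
  rcases hab.2 with h | h
  · exact key a b h
  · rw [abs_sub_comm]; exact key b a h

lemma abs_le_walk_length {V : Type*} {G : SimpleGraph V} (f : V → ℤ)
    (hf : ∀ a b, G.Adj a b → |f a - f b| ≤ 1) {u v : V} (p : G.Walk u v) :
    |f u - f v| ≤ p.length := by
  induction p with
  | nil => simp
  | @cons u w x h p ih =>
    rw [SimpleGraph.Walk.length_cons]
    push_cast
    have h1 := hf _ _ h
    have h2 := abs_sub_le (f u) (f w) (f x)
    push_cast at ih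
    linarith

lemma sphi_dist (n c : ℕ) (hn : 1 < n) {u v : Fin (n ^ 2 - 1)}
    (h : (spider n).Reachable u v) :
    |sphi n c u - sphi n c v| ≤ (spider n).dist u v := by
  obtain ⟨p, hp⟩ := h.exists_walk_length_eq_dist
  have h2 := abs_le_walk_length (G := spider n) (fun w => sphi n c (w : ℕ))
    (fun a b hab => sphi_lip n c hn hab) p
  rw [hp] at h2
  exact h2

/-- The `b`-th tip of the spider. -/
def tipN (n b : ℕ) : ℕ := if b = n - 1 then n ^ 2 - 2 else n * b + n - 1

/-- The depth of the `b`-th tip. -/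
def dep (n b : ℕ) : ℤ := if b = 0 ∨ b = n - 1 then (n : ℤ) - 1 else n

lemma dep_ge (n b : ℕ) : (n : ℤ) - 1 ≤ dep n b := by
  unfold dep; split
  · exact le_rfl
  · linarith

lemma tip_eq (n b : ℕ) (hn : 1 < n) (hb : b < n) :
    tipN n b = n * b + (if b = n - 1 then n - 2 else n - 1) := by
  unfold tipN
  split
  · rename_i h
    subst h
    obtain ⟨m, rfl⟩ : ∃ m, n = m + 2 := ⟨n - 2, by omega⟩
    have h1 : (m+2)^2 = m*m + 4*m + 4 := by ring
    have h2 : (m+2)*(m+2-1) = m*m + 3*m + 2 := by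
      have e : m + 2 - 1 = m + 1 := rfl
      rw [e]; ring
    omega
  · omega

lemma tip_div (n b : ℕ) (hn : 1 < n) (hb : b < n) :
    tipN n b / n = b ∧ tipN n b % n = (if b = n - 1 then n - 2 else n - 1) := by
  rw [tip_eq n b hn hb]
  have hlt : (if b = n - 1 then n - 2 else n - 1) < n := by split <;> omega
  constructor
  · rw [Nat.mul_add_div (by omega), Nat.div_eq_of_lt hlt]; omega
  · rw [Nat.mul_add_mod]; exact Nat.mod_eq_of_lt hlt

lemma tip_lt (n b : ℕ) (hn : 1 < n) (hb : b < n) : tipN n b < n ^ 2 - 1 := by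
  obtain ⟨m, rfl⟩ : ∃ m, n = m + 2 := ⟨n - 2, by omega⟩
  have h1 : (m+2)^2 = m*m + 4*m + 4 := by ring
  unfold tipN
  split
  · omega
  · rename_i h
    have hb2 : b ≤ m := by omega
    have h2 : (m+2)*b ≤ (m+2)*m := Nat.mul_le_mul_left _ hb2
    have h3 : (m+2)*m = m*m + 2*m := by ring
    omega

lemma tip_sphi (n b : ℕ) (hn : 1 < n) (hb : b < n) :
    sphi n b (tipN n b) = dep n b := by
  obtain ⟨hdiv, hmod⟩ := tip_div n b hn hb
  unfold sphi dep
  rw [if_pos hdiv, one_mul]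
  by_cases hb0 : b = 0
  · subst hb0
    have ht : tipN n 0 = n - 1 := by
      rw [tip_eq n 0 hn hb, if_neg (by omega)]; omega
    rw [ht, if_pos (by omega : n - 1 < n), if_pos (Or.inl rfl)]
    push_cast [Nat.cast_sub (by omega : 1 ≤ n)]
    ring
  · have ht : n ≤ tipN n b := by
      rw [tip_eq n b hn hb]
      have h2 : n ≤ n * b := Nat.le_mul_of_pos_right n (by omega)
      omega
    rw [if_neg (not_lt.2 ht), hmod]
    by_cases hbn : b = n - 1
    · rw [if_pos hbn, if_pos (Or.inr hbn)]
      push_cast [Nat.cast_sub (by omega : 2 ≤ n)]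
      ring
    · rw [if_neg hbn, if_neg (by tauto)]
      push_cast [Nat.cast_sub (by omega : 1 ≤ n)]
      ring

/-- Every burning sequence of the spider tree `Y_{n²-1}` of length `n - 1` starts at the
center vertex (the paper's vertex `1`). -/
theorem stmt19 (n : ℕ) (hn : 1 < n) (s : ℕ → Fin (n ^ 2 - 1))
    (hS : IsBurningSeq (spider n) s (n - 1)) : (s 1 : ℕ) = 0 := by
  obtain ⟨-, -, hcov⟩ := hS
  set G := spider n with hG
  -- tips
  let T : Fin n → Fin (n ^ 2 - 1) := fun b => ⟨tipN n b, tip_lt n b hn b.isLt⟩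
  have hcov' : ∀ b : Fin n, ∃ k, 1 ≤ k ∧ k ≤ n - 1 ∧
      G.Reachable (s k) (T b) ∧ G.dist (s k) (T b) ≤ n - k := by
    intro b
    obtain ⟨k, h1, h2, _, h4, h5⟩ := hcov (T b)
    refine ⟨k, h1, h2, h4, ?_⟩
    rwa [show n - 1 + 1 = n by omega] at h5
  choose K hK1 hK2 hK3 hK4 using hcov'
  -- pigeonhole on the n tips vs n-1 sources
  have hpig : ∃ b ∈ (Finset.univ : Finset (Fin n)), ∃ b' ∈ (Finset.univ : Finset (Fin n)),
      b ≠ b' ∧ K b = K b' := by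
    apply Finset.exists_ne_map_eq_of_card_lt_of_maps_to (t := Finset.Icc 1 (n - 1))
    · rw [Nat.card_Icc, Finset.card_univ, Fintype.card_fin]; omega
    · intro b _
      exact Finset.mem_Icc.mpr ⟨hK1 b, hK2 b⟩
  obtain ⟨b, -, b', -, hbb', hkk⟩ := hpig
  have hcastk : ((n - K b : ℕ) : ℤ) = (n : ℤ) - K b := by
    have := hK2 b
    push_cast [Nat.cast_sub (by omega : K b ≤ n)]
    ring
  have key : ∀ c : Fin n, G.Reachable (s (K b)) (T c) → G.dist (s (K b)) (T c) ≤ n - K b →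
      dep n c - ((n : ℤ) - K b) ≤ sphi n c ((s (K b)) : ℕ) := by
    intro c hreach hdist
    have hd := sphi_dist n c hn hreach
    have htip : sphi n (c : ℕ) ((T c : Fin (n ^ 2 - 1)) : ℕ) = dep n c := by
      show sphi n (c : ℕ) (tipN n c) = dep n c
      exact tip_sphi n c hn c.isLt
    rw [htip] at hd
    have hdist' : ((G.dist (s (K b)) (T c) : ℕ) : ℤ) ≤ (n : ℤ) - K b := by
      rw [← hcastk]; exact_mod_cast hdist
    have := abs_le.mp hd
    linarith
  have hbound1 := key b (hK3 b) (hK4 b)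
  have hreach' : G.Reachable (s (K b)) (T b') := by rw [hkk]; exact hK3 b'
  have hdist' : G.dist (s (K b)) (T b') ≤ n - K b := by rw [hkk]; exact hK4 b'
  have hbound2 := key b' hreach' hdist'
  have hk1 : (1 : ℤ) ≤ (K b : ℤ) := by exact_mod_cast hK1 b
  by_cases hv0 : ((s (K b)) : ℕ) = 0
  · -- then K b = 1 and we are done
    rw [hv0, sphi_zero n b hn] at hbound1
    have hdep := dep_ge n b
    have : ((K b : ℕ) : ℤ) ≤ 1 := by linarith
    have hkval : K b = 1 := by omega
    rw [hkval] at hv0; exact hv0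
  · exfalso
    have h1 : 0 ≤ sphi n (b : ℕ) ((s (K b)) : ℕ) := by
      have := dep_ge n b; linarith
    have h2 : 0 ≤ sphi n (b' : ℕ) ((s (K b)) : ℕ) := by
      have := dep_ge n b'; linarith
    have e1 := sphi_nonneg_block n b ((s (K b)) : ℕ) hv0 h1
    have e2 := sphi_nonneg_block n b' ((s (K b)) : ℕ) hv0 h2
    exact hbb' (Fin.val_injective (e1.symm.trans e2))
end
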